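/- arXiv:2311.03856 — 4 statements merged into one kernel-verified Lean document; each statement's English description precedes it below -/
import Mathlib

section
/- Let T : [0,1] → [0,1] be a transitive piecewise monotonic map. Then for every x ∈ R, the intersection ⋂_{k=1}^∞ ξ_k(x) equals the one-point set {x}. -/
open MeasureTheory Filter Set
open scoped ENNReal NNReal

/-- `T` is a (Borel measurable) piecewise monotonic map with `N > 1` pieces and critical points
`0 = c 0 < c 1 < ⋯ < c N = 1`: on each interval of monotonicity `(c (i-1), c i)` the map `T`
is strictly monotonic and continuous. -/
def IsPiecewiseMonotonic (T : unitInterval → unitInterval) (N : ℕ) (c : ℕ → unitInterval) :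
    Prop :=
  Measurable T ∧ 1 < N ∧ c 0 = 0 ∧ c N = 1 ∧ StrictMonoOn c (Set.Iic N) ∧
  ∀ i : ℕ, 1 ≤ i → i ≤ N →
    (StrictMonoOn T (Set.Ioo (c (i - 1)) (c i)) ∨ StrictAntiOn T (Set.Ioo (c (i - 1)) (c i))) ∧
    ContinuousOn T (Set.Ioo (c (i - 1)) (c i))

/-- `T` is (topologically) transitive: some point has dense forward orbit. -/
def TransitiveMap (T : unitInterval → unitInterval) : Prop :=
  ∃ x : unitInterval, Dense (Set.range fun n : ℕ => T^[n] x)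

/-- The partition `ξ` into the open intervals of monotonicity. -/
def xiPart (N : ℕ) (c : ℕ → unitInterval) : Set (Set unitInterval) :=
  {Z | ∃ i : ℕ, 1 ≤ i ∧ i ≤ N ∧ Z = Set.Ioo (c (i - 1)) (c i)}

/-- The refinement `ξ_k = ⋁_{i=0}^{k-1} T^{-i} ξ`: nonempty sets of the form
`⋂_{i<k} T^{-i} Z i` with `Z i ∈ ξ`. -/
def xiRef (T : unitInterval → unitInterval) (N : ℕ) (c : ℕ → unitInterval) (k : ℕ) :
    Set (Set unitInterval) :=
  {A | A.Nonempty ∧ ∃ Z : ℕ → Set unitInterval, (∀ i < k, Z i ∈ xiPart N c) ∧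
    A = ⋂ i ∈ Finset.range k, T^[i] ⁻¹' Z i}

/-- The set `R = ⋂_{n ≥ 0} T^{-n} ⋃_{Z ∈ ξ} Z` of points whose orbit avoids the
critical points. -/
def goodSet (T : unitInterval → unitInterval) (N : ℕ) (c : ℕ → unitInterval) :
    Set unitInterval :=
  ⋂ n : ℕ, T^[n] ⁻¹' ⋃₀ xiPart N c

/-- The element `ξ_k(x)` of `ξ_k` containing `x`, encoded as the intersection of all elements
of `ξ_k` containing `x`; for `x ∈ R` there is exactly one such element. -/
def xiCell (T : unitInterval → unitInterval) (N : ℕ) (c : ℕ → unitInterval) (k : ℕ)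
    (x : unitInterval) : Set unitInterval :=
  ⋂₀ {A | A ∈ xiRef T N c k ∧ x ∈ A}


/- ————————————————— auxiliary machinery ————————————————— -/

namespace XiGenAux

open Function

variable {T : unitInterval → unitInterval} {N : ℕ} {c : ℕ → unitInterval}

/-- The `b`-th branch interval. -/
def Zf (c : ℕ → unitInterval) (b : ℕ) : Set unitInterval := Set.Ioo (c (b - 1)) (c b)

lemma Zf_disj_aux (hc : StrictMonoOn c (Set.Iic N)) {b b' : ℕ}
    (hbN : b ≤ N) (hb'N : b' ≤ N) (hlt : b < b')
    {t : unitInterval} (ht : t ∈ Zf c b) (ht' : t ∈ Zf c b') : False := by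
  have hle : b ≤ b' - 1 := by omega
  have h1 : c b ≤ c (b' - 1) :=
    hc.monotoneOn (Set.mem_Iic.2 hbN) (Set.mem_Iic.2 (by omega)) hle
  exact absurd (lt_of_lt_of_le ht.2 (le_trans h1 (le_of_lt ht'.1))) (lt_irrefl t)

lemma Zf_eq (hc : StrictMonoOn c (Set.Iic N)) {b b' : ℕ}
    (hbN : b ≤ N) (hb'N : b' ≤ N)
    {t : unitInterval} (ht : t ∈ Zf c b) (ht' : t ∈ Zf c b') : b = b' := by
  by_contra hne
  rcases Nat.lt_or_ge b b' with h | h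
  · exact Zf_disj_aux hc hbN hb'N h ht ht'
  · exact Zf_disj_aux hc hb'N hbN (by omega) ht' ht

/-- The cylinder (cell) of depth `k` for itinerary `a`. -/
def Pset (T : unitInterval → unitInterval) (c : ℕ → unitInterval) (a : ℕ → ℕ) (k : ℕ) :
    Set unitInterval := ⋂ i, ⋂ (_ : i < k), T^[i] ⁻¹' Zf c (a i)

lemma mem_Pset {a : ℕ → ℕ} {k : ℕ} {y : unitInterval} :
    y ∈ Pset T c a k ↔ ∀ i < k, T^[i] y ∈ Zf c (a i) := by
  simp [Pset]

/-- The full fiber of itinerary `a`. -/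
def Fib (T : unitInterval → unitInterval) (c : ℕ → unitInterval) (a : ℕ → ℕ) :
    Set unitInterval := ⋂ i, T^[i] ⁻¹' Zf c (a i)

lemma mem_Fib {a : ℕ → ℕ} {y : unitInterval} :
    y ∈ Fib T c a ↔ ∀ i, T^[i] y ∈ Zf c (a i) := by
  simp [Fib]

lemma Fib_subset_Pset (a : ℕ → ℕ) (k : ℕ) : Fib T c a ⊆ Pset T c a k := fun y hy =>
  mem_Pset.2 fun i _ => mem_Fib.1 hy i

lemma Pset_succ (a : ℕ → ℕ) (k : ℕ) :
    Pset T c a (k + 1) = Pset T c a k ∩ T^[k] ⁻¹' Zf c (a k) := by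
  ext y
  simp only [mem_Pset, Set.mem_inter_iff, Set.mem_preimage]
  constructor
  · intro h; exact ⟨fun i hi => h i (Nat.lt_succ_of_lt hi), h k (Nat.lt_succ_self k)⟩
  · rintro ⟨h1, h2⟩ i hi
    rcases Nat.lt_succ_iff_lt_or_eq.1 hi with h | rfl
    · exact h1 i h
    · exact h2

lemma pset_props (hpm : IsPiecewiseMonotonic T N c)
    (a : ℕ → ℕ) (ha : ∀ i, 1 ≤ a i ∧ a i ≤ N) :
    ∀ k, (Pset T c a k).OrdConnected ∧
      (StrictMonoOn T^[k] (Pset T c a k) ∨ StrictAntiOn T^[k] (Pset T c a k)) := by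
  intro k; induction k with
  | zero =>
    have h0 : Pset T c a 0 = Set.univ := by ext y; simp [mem_Pset]
    rw [h0]
    exact ⟨Set.ordConnected_univ, Or.inl fun u _ v _ h => by simpa using h⟩
  | succ k ih =>
    obtain ⟨hoc, hmono⟩ := ih
    rw [Pset_succ]
    have hsub : Pset T c a k ∩ T^[k] ⁻¹' Zf c (a k) ⊆ Pset T c a k := Set.inter_subset_left
    have hmaps : Set.MapsTo T^[k] (Pset T c a k ∩ T^[k] ⁻¹' Zf c (a k)) (Zf c (a k)) :=
      fun y hy => hy.2
    have hT := (hpm.2.2.2.2.2 (a k) (ha k).1 (ha k).2).1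
    constructor
    · constructor
      intro u hu v hv t ht
      have htP : t ∈ Pset T c a k := hoc.out hu.1 hv.1 ht
      refine ⟨htP, ?_⟩
      rcases hmono with hm | hm
      · exact ⟨lt_of_lt_of_le hu.2.1 (hm.monotoneOn hu.1 htP ht.1),
          lt_of_le_of_lt (hm.monotoneOn htP hv.1 ht.2) hv.2.2⟩
      · exact ⟨lt_of_lt_of_le hv.2.1 (hm.antitoneOn htP hv.1 ht.2),
          lt_of_le_of_lt (hm.antitoneOn hu.1 htP ht.1) hu.2.2⟩
    · have heq : T^[k + 1] = T ∘ T^[k] := Function.iterate_succ' T k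
      rcases hmono with hm | hm <;> rcases hT with hTm | hTa
      · exact Or.inl (heq ▸ hTm.comp (hm.mono hsub) hmaps)
      · exact Or.inr (heq ▸ hTa.comp_strictMonoOn (hm.mono hsub) hmaps)
      · exact Or.inr (heq ▸ hTm.comp_strictAntiOn (hm.mono hsub) hmaps)
      · exact Or.inl (heq ▸ hTa.comp (hm.mono hsub) hmaps)

lemma fib_ordConnected (hpm : IsPiecewiseMonotonic T N c)
    (a : ℕ → ℕ) (ha : ∀ i, 1 ≤ a i ∧ a i ≤ N) : (Fib T c a).OrdConnected := by
  constructor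
  intro u hu v hv t ht
  rw [mem_Fib]
  intro i
  have h := (pset_props hpm a ha (i + 1)).1
  have htP : t ∈ Pset T c a (i + 1) :=
    h.out (Fib_subset_Pset a (i + 1) hu) (Fib_subset_Pset a (i + 1) hv) ht
  exact mem_Pset.1 htP i (Nat.lt_succ_self i)

/-- eventually monotone (nondecreasing or nonincreasing from some index) -/
def EvMono (u : ℕ → unitInterval) : Prop :=
  ∃ j₀ : ℕ, (∀ j j', j₀ ≤ j → j ≤ j' → u j ≤ u j') ∨ (∀ j j', j₀ ≤ j → j ≤ j' → u j' ≤ u j)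

lemma conv_of_monotone {u : ℕ → unitInterval} (h : Monotone u ∨ Antitone u) :
    ∃ ζ, Tendsto u atTop (nhds ζ) := by
  have hbA : BddAbove (Set.range fun j => (u j : ℝ)) :=
    ⟨1, by rintro _ ⟨j, rfl⟩; exact (u j).2.2⟩
  have hbB : BddBelow (Set.range fun j => (u j : ℝ)) :=
    ⟨0, by rintro _ ⟨j, rfl⟩; exact (u j).2.1⟩
  rcases h with h | h
  · have hm : Monotone fun j => (u j : ℝ) := fun i j hij => Subtype.coe_le_coe.2 (h hij)
    have ht := tendsto_atTop_ciSup hm hbA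
    have hL : (⨆ j, (u j : ℝ)) ∈ Set.Icc (0 : ℝ) 1 :=
      ⟨le_trans (u 0).2.1 (le_ciSup hbA 0), ciSup_le fun j => (u j).2.2⟩
    refine ⟨⟨_, hL⟩, ?_⟩
    rw [Topology.IsEmbedding.subtypeVal.tendsto_nhds_iff]
    exact ht
  · have hm : Antitone fun j => (u j : ℝ) := fun i j hij => Subtype.coe_le_coe.2 (h hij)
    have ht := tendsto_atTop_ciInf hm hbB
    have hL : (⨅ j, (u j : ℝ)) ∈ Set.Icc (0 : ℝ) 1 :=
      ⟨le_ciInf fun j => (u j).2.1, le_trans (ciInf_le hbB 0) (u 0).2.2⟩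
    refine ⟨⟨_, hL⟩, ?_⟩
    rw [Topology.IsEmbedding.subtypeVal.tendsto_nhds_iff]
    exact ht

lemma conv_of_evMono {u : ℕ → unitInterval} (h : EvMono u) :
    ∃ ζ, Tendsto u atTop (nhds ζ) := by
  obtain ⟨j₀, h⟩ := h
  have hshift : ∃ ζ, Tendsto (fun j => u (j + j₀)) atTop (nhds ζ) := by
    apply conv_of_monotone
    rcases h with h | h
    · exact Or.inl fun i j hij => h (i + j₀) (j + j₀) (Nat.le_add_left _ _) (by omega)
    · exact Or.inr fun i j hij => h (i + j₀) (j + j₀) (Nat.le_add_left _ _) (by omega)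
  obtain ⟨ζ, hζ⟩ := hshift
  exact ⟨ζ, (tendsto_add_atTop_iff_nat j₀).1 hζ⟩

lemma step_mono (hpm : IsPiecewiseMonotonic T N c) {v : ℕ → unitInterval} (hv : Monotone v) :
    ∃ j₁, (∀ j j', j₁ ≤ j → j ≤ j' → T (v j) ≤ T (v j')) ∨
      (∀ j j', j₁ ≤ j → j ≤ j' → T (v j') ≤ T (v j)) := by
  obtain ⟨-, hN, hc0, hcN, hc, hbr⟩ := hpm
  have hbA : BddAbove (Set.range fun j => (v j : ℝ)) :=
    ⟨1, by rintro _ ⟨j, rfl⟩; exact (v j).2.2⟩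
  have hm : Monotone fun j => (v j : ℝ) := fun i j hij => Subtype.coe_le_coe.2 (hv hij)
  set L : ℝ := ⨆ j, (v j : ℝ) with hLdef
  have hub : ∀ j, (v j : ℝ) ≤ L := fun j => le_ciSup hbA j
  by_cases hconst : ∃ j₂, (v j₂ : ℝ) = L
  · obtain ⟨j₂, hj₂⟩ := hconst
    refine ⟨j₂, Or.inl fun j j' hj hjj' => ?_⟩
    have h1 : v j = v j₂ :=
      le_antisymm (Subtype.coe_le_coe.1 (by rw [hj₂]; exact hub j)) (hv hj)
    have h2 : v j' = v j₂ :=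
      le_antisymm (Subtype.coe_le_coe.1 (by rw [hj₂]; exact hub j')) (hv (le_trans hj hjj'))
    rw [h1, h2]
  · push_neg at hconst
    have hlt : ∀ j, (v j : ℝ) < L := fun j => lt_of_le_of_ne (hub j) (hconst j)
    have hL1 : L ≤ 1 := ciSup_le fun j => (v j).2.2
    set S : Finset ℕ := (Finset.range (N + 1)).filter (fun i => (c i : ℝ) < L) with hSdef
    have h0S : 0 ∈ S := by
      refine Finset.mem_filter.2 ⟨Finset.mem_range.2 (by omega), ?_⟩
      have h00 : (c 0 : ℝ) = 0 := by rw [hc0]; rfl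
      rw [h00]
      exact lt_of_le_of_lt (v 0).2.1 (hlt 0)
    have hSne : S.Nonempty := ⟨0, h0S⟩
    set i₀ : ℕ := S.max' hSne with hi₀def
    have hi₀S : i₀ ∈ S := S.max'_mem hSne
    have hi₀N : i₀ ≤ N := by
      have := Finset.mem_range.1 (Finset.mem_filter.1 hi₀S).1; omega
    have hi₀L : (c i₀ : ℝ) < L := (Finset.mem_filter.1 hi₀S).2
    have hi₀ne : i₀ ≠ N := by
      intro h
      rw [h, hcN] at hi₀L
      have h1L : (1 : ℝ) < L := hi₀L
      linarith
    have hnext : i₀ + 1 ≤ N := by omega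
    have hnotS : ¬ ((c (i₀ + 1) : ℝ) < L) := by
      intro h
      have hmem : i₀ + 1 ∈ S := Finset.mem_filter.2 ⟨Finset.mem_range.2 (by omega), h⟩
      have := S.le_max' (i₀ + 1) hmem
      omega
    have htL := tendsto_atTop_ciSup hm hbA
    have hev : ∀ᶠ j in atTop, (v j : ℝ) ∈ Set.Ioi (c i₀ : ℝ) :=
      htL.eventually_mem (Ioi_mem_nhds hi₀L)
    obtain ⟨j₁, hj₁⟩ := eventually_atTop.1 hev
    have hmem : ∀ j, j₁ ≤ j → v j ∈ Set.Ioo (c (i₀ + 1 - 1)) (c (i₀ + 1)) := by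
      intro j hj
      have h1 : c i₀ < v j := Subtype.coe_lt_coe.1 (hj₁ j hj)
      have h2 : (v j : ℝ) < (c (i₀ + 1) : ℝ) := lt_of_lt_of_le (hlt j) (not_lt.1 hnotS)
      rw [Nat.add_sub_cancel]
      exact ⟨h1, Subtype.coe_lt_coe.1 h2⟩
    rcases (hbr (i₀ + 1) (by omega) hnext).1 with hTm | hTa
    · refine ⟨j₁, Or.inl fun j j' hj hjj' => ?_⟩
      rcases eq_or_lt_of_le (hv hjj') with he | hlt'
      · rw [he]
      · exact le_of_lt (hTm (hmem j hj) (hmem j' (le_trans hj hjj')) hlt')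
    · refine ⟨j₁, Or.inr fun j j' hj hjj' => ?_⟩
      rcases eq_or_lt_of_le (hv hjj') with he | hlt'
      · rw [he]
      · exact le_of_lt (hTa (hmem j hj) (hmem j' (le_trans hj hjj')) hlt')

lemma step_anti (hpm : IsPiecewiseMonotonic T N c) {v : ℕ → unitInterval} (hv : Antitone v) :
    ∃ j₁, (∀ j j', j₁ ≤ j → j ≤ j' → T (v j) ≤ T (v j')) ∨
      (∀ j j', j₁ ≤ j → j ≤ j' → T (v j') ≤ T (v j)) := by
  obtain ⟨-, hN, hc0, hcN, hc, hbr⟩ := hpm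
  have hbB : BddBelow (Set.range fun j => (v j : ℝ)) :=
    ⟨0, by rintro _ ⟨j, rfl⟩; exact (v j).2.1⟩
  have hm : Antitone fun j => (v j : ℝ) := fun i j hij => Subtype.coe_le_coe.2 (hv hij)
  set L : ℝ := ⨅ j, (v j : ℝ) with hLdef
  have hlb : ∀ j, L ≤ (v j : ℝ) := fun j => ciInf_le hbB j
  by_cases hconst : ∃ j₂, (v j₂ : ℝ) = L
  · obtain ⟨j₂, hj₂⟩ := hconst
    refine ⟨j₂, Or.inl fun j j' hj hjj' => ?_⟩
    have h1 : v j = v j₂ :=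
      le_antisymm (hv hj) (Subtype.coe_le_coe.1 (by rw [hj₂]; exact hlb j))
    have h2 : v j' = v j₂ :=
      le_antisymm (hv (le_trans hj hjj')) (Subtype.coe_le_coe.1 (by rw [hj₂]; exact hlb j'))
    rw [h1, h2]
  · push_neg at hconst
    have hlt : ∀ j, L < (v j : ℝ) := fun j => lt_of_le_of_ne (hlb j) (Ne.symm (hconst j))
    have hL0 : 0 ≤ L := le_ciInf fun j => (v j).2.1
    set S : Finset ℕ := (Finset.range (N + 1)).filter (fun i => L < (c i : ℝ)) with hSdef
    have hNS : N ∈ S := by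
      refine Finset.mem_filter.2 ⟨Finset.mem_range.2 (by omega), ?_⟩
      have h1 : (c N : ℝ) = 1 := by rw [hcN]; rfl
      rw [h1]
      exact lt_of_lt_of_le (hlt 0) (v 0).2.2
    have hSne : S.Nonempty := ⟨N, hNS⟩
    set i₀ : ℕ := S.min' hSne with hi₀def
    have hi₀S : i₀ ∈ S := S.min'_mem hSne
    have hi₀N : i₀ ≤ N := by
      have := Finset.mem_range.1 (Finset.mem_filter.1 hi₀S).1; omega
    have hi₀L : L < (c i₀ : ℝ) := (Finset.mem_filter.1 hi₀S).2
    have hi₀ne : i₀ ≠ 0 := by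
      intro h
      rw [h, hc0] at hi₀L
      have h0L : L < (0 : ℝ) := hi₀L
      linarith
    have h1i₀ : 1 ≤ i₀ := by omega
    have hnotS : ¬ (L < (c (i₀ - 1) : ℝ)) := by
      intro h
      have hmem : i₀ - 1 ∈ S := Finset.mem_filter.2 ⟨Finset.mem_range.2 (by omega), h⟩
      have := S.min'_le (i₀ - 1) hmem
      omega
    have htL := tendsto_atTop_ciInf hm hbB
    have hev : ∀ᶠ j in atTop, (v j : ℝ) ∈ Set.Iio (c i₀ : ℝ) :=
      htL.eventually_mem (Iio_mem_nhds hi₀L)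
    obtain ⟨j₁, hj₁⟩ := eventually_atTop.1 hev
    have hmem : ∀ j, j₁ ≤ j → v j ∈ Set.Ioo (c (i₀ - 1)) (c i₀) := by
      intro j hj
      have h2 : v j < c i₀ := Subtype.coe_lt_coe.1 (hj₁ j hj)
      have h1 : (c (i₀ - 1) : ℝ) < (v j : ℝ) := lt_of_le_of_lt (not_lt.1 hnotS) (hlt j)
      exact ⟨Subtype.coe_lt_coe.1 h1, h2⟩
    rcases (hbr i₀ h1i₀ hi₀N).1 with hTm | hTa
    · refine ⟨j₁, Or.inr fun j j' hj hjj' => ?_⟩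
      rcases eq_or_lt_of_le (hv hjj') with he | hlt'
      · rw [he]
      · exact le_of_lt (hTm (hmem j' (le_trans hj hjj')) (hmem j hj) hlt')
    · refine ⟨j₁, Or.inl fun j j' hj hjj' => ?_⟩
      rcases eq_or_lt_of_le (hv hjj') with he | hlt'
      · rw [he]
      · exact le_of_lt (hTa (hmem j' (le_trans hj hjj')) (hmem j hj) hlt')

lemma evMono_T (hpm : IsPiecewiseMonotonic T N c) {u : ℕ → unitInterval} (h : EvMono u) :
    EvMono fun j => T (u j) := by
  obtain ⟨j₀, h⟩ := h
  rcases h with h | h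
  · have hv : Monotone fun j => u (j + j₀) := fun i j hij =>
      h (i + j₀) (j + j₀) (Nat.le_add_left _ _) (by omega)
    obtain ⟨j₁, hcase⟩ := step_mono hpm hv
    refine ⟨j₁ + j₀, ?_⟩
    rcases hcase with hC | hC
    · refine Or.inl fun j j' hj hjj' => ?_
      have h2 := hC (j - j₀) (j' - j₀) (by omega) (by omega)
      have e1 : j - j₀ + j₀ = j := by omega
      have e2 : j' - j₀ + j₀ = j' := by omega
      simp only [e1, e2] at h2
      exact h2
    · refine Or.inr fun j j' hj hjj' => ?_
      have h2 := hC (j - j₀) (j' - j₀) (by omega) (by omega)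
      have e1 : j - j₀ + j₀ = j := by omega
      have e2 : j' - j₀ + j₀ = j' := by omega
      simp only [e1, e2] at h2
      exact h2
  · have hv : Antitone fun j => u (j + j₀) := fun i j hij =>
      h (i + j₀) (j + j₀) (Nat.le_add_left _ _) (by omega)
    obtain ⟨j₁, hcase⟩ := step_anti hpm hv
    refine ⟨j₁ + j₀, ?_⟩
    rcases hcase with hC | hC
    · refine Or.inl fun j j' hj hjj' => ?_
      have h2 := hC (j - j₀) (j' - j₀) (by omega) (by omega)
      have e1 : j - j₀ + j₀ = j := by omega
      have e2 : j' - j₀ + j₀ = j' := by omega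
      simp only [e1, e2] at h2
      exact h2
    · refine Or.inr fun j j' hj hjj' => ?_
      have h2 := hC (j - j₀) (j' - j₀) (by omega) (by omega)
      have e1 : j - j₀ + j₀ = j := by omega
      have e2 : j' - j₀ + j₀ = j' := by omega
      simp only [e1, e2] at h2
      exact h2

lemma exists_btwn {u v : unitInterval} (h : u < v) : ∃ w, u < w ∧ w < v := by
  have hlt : (u : ℝ) < (v : ℝ) := Subtype.coe_lt_coe.2 h
  have hmem : ((u : ℝ) + (v : ℝ)) / 2 ∈ Set.Icc (0 : ℝ) 1 := by
    constructor
    · have h1 := u.2.1; have h2 := v.2.1; linarith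
    · have h1 := u.2.2; have h2 := v.2.2; linarith
  refine ⟨⟨_, hmem⟩, ?_, ?_⟩
  · exact Subtype.coe_lt_coe.1 (show (u : ℝ) < ((u : ℝ) + (v : ℝ)) / 2 by linarith)
  · exact Subtype.coe_lt_coe.1 (show ((u : ℝ) + (v : ℝ)) / 2 < (v : ℝ) by linarith)

lemma isOpen_Ioo' (a b : unitInterval) : IsOpen (Set.Ioo a b) := by
  have h : Set.Ioo a b = ((↑) : unitInterval → ℝ) ⁻¹' Set.Ioo (a : ℝ) (b : ℝ) := by
    ext t
    simp only [Set.mem_Ioo, Set.mem_preimage, Subtype.coe_lt_coe]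
  rw [h]
  exact isOpen_Ioo.preimage continuous_subtype_val

lemma fib_two_points (hpm : IsPiecewiseMonotonic T N c) (htr : TransitiveMap T)
    (a : ℕ → ℕ) (ha : ∀ i, 1 ≤ a i ∧ a i ≤ N)
    {u v : unitInterval} (hu : u ∈ Fib T c a) (hv : v ∈ Fib T c a) (hlt : u < v) : False := by
  have hc : StrictMonoOn c (Set.Iic N) := hpm.2.2.2.2.1
  have hoc : (Fib T c a).OrdConnected := fib_ordConnected hpm a ha
  have hUfib : Set.Ioo u v ⊆ Fib T c a := fun t ht =>
    hoc.out hu hv ⟨le_of_lt ht.1, le_of_lt ht.2⟩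
  obtain ⟨γ, hγ1, hγ2⟩ := exists_btwn hlt
  obtain ⟨z, hz⟩ := htr
  obtain ⟨p₁, hp₁D, hp₁⟩ :=
    hz.exists_mem_open (isOpen_Ioo' u γ) ((exists_btwn hγ1).imp fun w hw => hw)
  obtain ⟨p₂, hp₂D, hp₂⟩ :=
    hz.exists_mem_open (isOpen_Ioo' γ v) ((exists_btwn hγ2).imp fun w hw => hw)
  obtain ⟨m₁, hm₁⟩ := hp₁D
  obtain ⟨m₂, hm₂⟩ := hp₂D
  have hm₁' : T^[m₁] z = p₁ := hm₁
  have hm₂' : T^[m₂] z = p₂ := hm₂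
  have hm12 : m₁ ≠ m₂ := by
    intro h
    rw [h, hm₂'] at hm₁'
    exact absurd (lt_trans hp₂.1 (hm₁' ▸ hp₁.2 : p₂ < γ)) (lt_irrefl γ)
  set m₀ : ℕ := min m₁ m₂ with hm₀def
  set m₃ : ℕ := max m₁ m₂ with hm₃def
  have hd1 : m₀ < m₃ := by
    rcases Nat.lt_or_ge m₁ m₂ with h | h
    · simp only [hm₀def, hm₃def]; omega
    · simp only [hm₀def, hm₃def]; omega
  set d : ℕ := m₃ - m₀ with hddef
  have hd : 1 ≤ d := by omega
  have hw₀U : T^[m₀] z ∈ Set.Ioo u v := by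
    rcases min_choice m₁ m₂ with h | h
    · rw [hm₀def, h, hm₁']; exact ⟨hp₁.1, lt_trans hp₁.2 hγ2⟩
    · rw [hm₀def, h, hm₂']; exact ⟨lt_trans hγ1 hp₂.1, hp₂.2⟩
  have hw₁U : T^[m₃] z ∈ Set.Ioo u v := by
    rcases max_choice m₁ m₂ with h | h
    · rw [hm₃def, h, hm₁']; exact ⟨hp₁.1, lt_trans hp₁.2 hγ2⟩
    · rw [hm₃def, h, hm₂']; exact ⟨lt_trans hγ1 hp₂.1, hp₂.2⟩
  set w₀ : unitInterval := T^[m₀] z with hw₀def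
  have hw₀f : w₀ ∈ Fib T c a := hUfib hw₀U
  have hw₁f : T^[m₃] z ∈ Fib T c a := hUfib hw₁U
  have hiter : T^[d] w₀ = T^[m₃] z := by
    rw [hw₀def, ← Function.iterate_add_apply]
    congr 1
    omega
  -- the itinerary is periodic with period d
  have hper : ∀ i, a (i + d) = a i := by
    intro i
    have h1 : T^[i] (T^[m₃] z) ∈ Zf c (a i) := mem_Fib.1 hw₁f i
    have h2 : T^[i] (T^[m₃] z) ∈ Zf c (a (i + d)) := by
      rw [← hiter, ← Function.iterate_add_apply]
      exact mem_Fib.1 hw₀f (i + d)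
    exact Zf_eq hc (ha (i + d)).2 (ha i).2 h2 h1
  -- maps-to
  have hmapsd : Set.MapsTo T^[d] (Fib T c a) (Fib T c a) := by
    intro y hy
    rw [mem_Fib]
    intro i
    rw [← Function.iterate_add_apply, ← hper i]
    exact mem_Fib.1 hy (i + d)
  -- get a period r with T^[r] strictly monotone on the fiber
  obtain ⟨r, hr1, hperr, hmapsr, hmonor⟩ :
      ∃ r, 1 ≤ r ∧ (∀ i, a (i + r) = a i) ∧
        Set.MapsTo T^[r] (Fib T c a) (Fib T c a) ∧
        StrictMonoOn T^[r] (Fib T c a) := by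
    rcases (pset_props hpm a ha d).2 with hm | hm
    · exact ⟨d, hd, hper, hmapsd, hm.mono (Fib_subset_Pset a d)⟩
    · have hAF : StrictAntiOn T^[d] (Fib T c a) := hm.mono (Fib_subset_Pset a d)
      refine ⟨d + d, by omega, ?_, ?_, ?_⟩
      · intro i
        have e : i + (d + d) = i + d + d := by omega
        rw [e, hper (i + d), hper i]
      · intro y hy
        have e : T^[d + d] y = T^[d] (T^[d] y) := Function.iterate_add_apply T d d y
        change Fib T c a (T^[d + d] y)
        show T^[d+d] y ∈ Fib T c a
        rw [e]
        exact hmapsd (hmapsd hy)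
      · intro p hp q hq hpq
        have e1 : T^[d + d] p = T^[d] (T^[d] p) := Function.iterate_add_apply T d d p
        have e2 : T^[d + d] q = T^[d] (T^[d] q) := Function.iterate_add_apply T d d q
        rw [e1, e2]
        exact hAF (hmapsd hq) (hmapsd hp) (hAF hp hq hpq)
  -- the sequence of T^[r]-iterates of w₀
  set seq : ℕ → unitInterval := fun j => T^[j * r] w₀ with hseqdef
  have hstep : ∀ j, seq (j + 1) = T^[r] (seq j) := by
    intro j
    have hjr : (j + 1) * r = r + j * r := by ring
    simp only [hseqdef]
    rw [hjr, Function.iterate_add_apply]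
  have hseqF : ∀ j, seq j ∈ Fib T c a := by
    intro j
    induction j with
    | zero => simpa [hseqdef] using hw₀f
    | succ j ih => rw [hstep j]; exact hmapsr ih
  have hseqmono : Monotone seq ∨ Antitone seq := by
    rcases le_total (seq 0) (seq 1) with h01 | h01
    · left
      apply monotone_nat_of_le_succ
      intro j
      induction j with
      | zero => exact h01
      | succ j ih =>
        rw [hstep (j + 1)]
        rcases eq_or_lt_of_le ih with he | hlt'
        · calc seq (j + 1) = T^[r] (seq j) := hstep j
            _ ≤ T^[r] (seq (j + 1)) := le_of_eq (by rw [he])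
        · calc seq (j + 1) = T^[r] (seq j) := hstep j
            _ ≤ T^[r] (seq (j + 1)) :=
              le_of_lt (hmonor (hseqF j) (hseqF (j + 1)) hlt')
    · right
      apply antitone_nat_of_succ_le
      intro j
      induction j with
      | zero => exact h01
      | succ j ih =>
        rw [hstep (j + 1)]
        rcases eq_or_lt_of_le ih with he | hlt'
        · have hEq : T^[r] (seq (j + 1)) = seq (j + 1) := by
            rw [he, ← hstep j]; exact he
          exact le_of_eq hEq
        · calc T^[r] (seq (j + 1)) ≤ T^[r] (seq j) :=
              le_of_lt (hmonor (hseqF (j + 1)) (hseqF j) hlt')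
            _ = seq (j + 1) := (hstep j).symm
  -- each iterate sequence is eventually monotone, hence convergent
  have hEv : ∀ i, EvMono fun j => T^[i] (seq j) := by
    intro i
    induction i with
    | zero =>
      refine ⟨0, ?_⟩
      rcases hseqmono with h | h
      · exact Or.inl fun j j' _ hjj' => by simpa using h hjj'
      · exact Or.inr fun j j' _ hjj' => by simpa using h hjj'
    | succ i ih =>
      have he : (fun j => T^[i + 1] (seq j)) = fun j => T (T^[i] (seq j)) := by
        funext j
        exact Function.iterate_succ_apply' T i (seq j)
      rw [he]
      exact evMono_T hpm ih
  have hconv : ∀ i, ∃ ζ, Tendsto (fun j => T^[i] (seq j)) atTop (nhds ζ) :=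
    fun i => conv_of_evMono (hEv i)
  choose ζ hζ using hconv
  -- countability contradiction
  set D : Set unitInterval := Set.range fun n => T^[n] z with hDdef
  have hsubcl : closure D ⊆ D ∪ Set.range ζ := by
    intro p hp
    by_cases hpD : p ∈ D
    · exact Or.inl hpD
    rcases mem_closure_iff_seq_limit.1 hp with ⟨w, hwD, hwp⟩
    have hwD' : ∀ t, ∃ n, T^[n] z = w t := fun t => hwD t
    choose m hm using hwD'
    by_cases hbd : ∃ B, ∀ t, m t ≤ B
    · obtain ⟨B, hB⟩ := hbd
      have hfin : Set.Finite ((fun n => T^[n] z) '' Set.Iic B) :=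
        (Set.finite_Iic B).image _
      have hwS : ∀ t, w t ∈ (fun n => T^[n] z) '' Set.Iic B := fun t =>
        ⟨m t, hB t, hm t⟩
      have hpcl : p ∈ closure ((fun n => T^[n] z) '' Set.Iic B) :=
        mem_closure_of_tendsto hwp (Filter.Eventually.of_forall hwS)
      rw [hfin.isClosed.closure_eq] at hpcl
      obtain ⟨n, -, hn⟩ := hpcl
      exact absurd ⟨n, hn⟩ hpD
    · push_neg at hbd
      have key : ∀ T0 B : ℕ, ∃ t, T0 < t ∧ B < m t := by
        intro T0 B
        obtain ⟨t, ht⟩ := hbd (max B ((Finset.range (T0 + 1)).sup m))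
        refine ⟨t, ?_, by omega⟩
        by_contra hle
        push_neg at hle
        have : m t ≤ (Finset.range (T0 + 1)).sup m :=
          Finset.le_sup (Finset.mem_range.2 (by omega))
        omega
      obtain ⟨φ, hφ0, hφs⟩ :
          ∃ φ : ℕ → ℕ, m₀ < m (φ 0) ∧ ∀ s, φ s < φ (s + 1) ∧ m (φ s) < m (φ (s + 1)) := by
        refine ⟨fun s => Nat.rec (key 0 m₀).choose
          (fun _ ih => (key ih (m ih)).choose) s, ?_, fun s => ?_⟩
        · exact (key 0 m₀).choose_spec.2
        · exact ⟨(key _ _).choose_spec.1, (key _ _).choose_spec.2⟩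
      have hφmono : StrictMono φ := strictMono_nat_of_lt_succ fun s => (hφs s).1
      have hmmono : StrictMono fun s => m (φ s) :=
        strictMono_nat_of_lt_succ fun s => (hφs s).2
      have hm0le : ∀ s, m₀ ≤ m (φ s) := fun s =>
        le_of_lt (lt_of_lt_of_le hφ0 (hmmono.monotone (Nat.zero_le s)))
      set e : ℕ → ℕ := fun s => m (φ s) - m₀ with hedef
      have hemono : StrictMono e := by
        intro s s' hss'
        have h1 : m (φ s) < m (φ s') := hmmono hss'
        have h2 : m₀ ≤ m (φ s) := hm0le s
        show m (φ s) - m₀ < m (φ s') - m₀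
        omega
      have hdecomp : ∀ s, w (φ s) = T^[e s % r] (T^[(e s / r) * r] w₀) := by
        intro s
        rw [← hm (φ s), ← Function.iterate_add_apply]
        have he1 : e s % r + e s / r * r = e s := Nat.mod_add_div' (e s) r
        rw [he1, hw₀def, ← Function.iterate_add_apply]
        congr 1
        have h2 : m₀ ≤ m (φ s) := hm0le s
        show m (φ s) = m (φ s) - m₀ + m₀
        omega
      have hrpos : 0 < r := hr1
      obtain ⟨i₀, hinf⟩ :=
        Finite.exists_infinite_fiber fun s => (⟨e s % r, Nat.mod_lt _ hrpos⟩ : Fin r)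
      haveI := hinf
      set ψ : ℕ → ℕ := fun σ =>
        ((Nat.Subtype.orderIsoOfNat
          ((fun s => (⟨e s % r, Nat.mod_lt _ hrpos⟩ : Fin r)) ⁻¹' {i₀}) σ : _) : ℕ) with hψdef
      have hψmono : StrictMono ψ := fun σ σ' h => by
        have h2 := (Nat.Subtype.orderIsoOfNat
          ((fun s => (⟨e s % r, Nat.mod_lt _ hrpos⟩ : Fin r)) ⁻¹' {i₀})).strictMono h
        exact Subtype.coe_lt_coe.2 h2
      have hψmem : ∀ σ, e (ψ σ) % r = (i₀ : ℕ) := by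
        intro σ
        have hmem := (Nat.Subtype.orderIsoOfNat
          ((fun s => (⟨e s % r, Nat.mod_lt _ hrpos⟩ : Fin r)) ⁻¹' {i₀}) σ).2
        simp only [Set.mem_preimage, Set.mem_singleton_iff] at hmem
        exact congrArg Fin.val hmem
      have hlim1 : Tendsto (fun σ => w (φ (ψ σ))) atTop (nhds p) :=
        hwp.comp (hφmono.comp hψmono).tendsto_atTop
      have hjtend : Tendsto (fun σ => e (ψ σ) / r) atTop atTop := by
        rw [tendsto_atTop_atTop]
        intro B
        refine ⟨(B + 1) * r, fun σ hσ => ?_⟩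
        have h1 : (B + 1) * r ≤ e (ψ σ) :=
          le_trans hσ (hemono.comp hψmono).le_apply
        have h2 : B + 1 ≤ e (ψ σ) / r := (Nat.le_div_iff_mul_le hrpos).2 h1
        omega
      have hlim2 : Tendsto (fun σ => T^[(i₀ : ℕ)] (T^[(e (ψ σ) / r) * r] w₀)) atTop
          (nhds (ζ (i₀ : ℕ))) := (hζ (i₀ : ℕ)).comp hjtend
      have heqfn : (fun σ => w (φ (ψ σ))) =
          fun σ => T^[(i₀ : ℕ)] (T^[(e (ψ σ) / r) * r] w₀) := by
        funext σ
        rw [hdecomp (ψ σ), hψmem σ]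
      rw [heqfn] at hlim1
      exact Or.inr ⟨(i₀ : ℕ), (tendsto_nhds_unique hlim2 hlim1)⟩
  have huniv : (Set.univ : Set unitInterval) ⊆ D ∪ Set.range ζ := by
    rw [← hz.closure_eq]
    exact hsubcl
  have hcount : (Set.univ : Set unitInterval).Countable :=
    Set.Countable.mono huniv ((Set.countable_range _).union (Set.countable_range _))
  haveI : Countable unitInterval := Set.countable_univ_iff.1 hcount
  have hmk : Cardinal.mk ↥(Set.Icc (0 : ℝ) 1) ≤ Cardinal.aleph0 :=
    Cardinal.mk_le_aleph0
  rw [Cardinal.mk_Icc_real zero_lt_one] at hmk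
  exact absurd hmk (not_le.2 Cardinal.aleph0_lt_continuum)

lemma fib_subsingleton (hpm : IsPiecewiseMonotonic T N c) (htr : TransitiveMap T)
    (a : ℕ → ℕ) (ha : ∀ i, 1 ≤ a i ∧ a i ≤ N) : (Fib T c a).Subsingleton := by
  intro u hu v hv
  by_contra hne
  rcases lt_or_gt_of_ne hne with h | h
  · exact fib_two_points hpm htr a ha hu hv h
  · exact fib_two_points hpm htr a ha hv hu h

lemma xiCell_eq (hc : StrictMonoOn c (Set.Iic N)) {x : unitInterval} (a : ℕ → ℕ)
    (ha : ∀ i, 1 ≤ a i ∧ a i ≤ N) (hx : ∀ i, T^[i] x ∈ Zf c (a i)) (k : ℕ) :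
    xiCell T N c k x = Pset T c a k := by
  have hPform : Pset T c a k = ⋂ i ∈ Finset.range k, T^[i] ⁻¹' Zf c (a i) := by
    ext y
    simp [mem_Pset, Finset.mem_range]
  have hPmem : Pset T c a k ∈ {A | A ∈ xiRef T N c k ∧ x ∈ A} := by
    refine ⟨⟨⟨x, mem_Pset.2 fun i _ => hx i⟩,
      fun i => Zf c (a i), fun i _ => ⟨a i, (ha i).1, (ha i).2, rfl⟩, hPform⟩,
      mem_Pset.2 fun i _ => hx i⟩
  have hall : ∀ A ∈ {A | A ∈ xiRef T N c k ∧ x ∈ A}, A = Pset T c a k := by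
    rintro A ⟨⟨hne, Z, hZ, rfl⟩, hxA⟩
    have hxA' : ∀ i, i < k → T^[i] x ∈ Z i := by
      intro i hi
      have := Set.mem_iInter.1 hxA i
      exact Set.mem_iInter.1 this (Finset.mem_range.2 hi)
    have hZeq : ∀ i, i < k → Z i = Zf c (a i) := by
      intro i hi
      obtain ⟨b, hb1, hbN, hZb⟩ := hZ i hi
      have h1 : T^[i] x ∈ Zf c b := by
        have h0 := hxA' i hi
        rw [hZb] at h0
        exact h0
      have h2 : T^[i] x ∈ Zf c (a i) := hx i
      have := Zf_eq hc hbN (ha i).2 h1 h2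
      rw [hZb, this]
      rfl
    rw [hPform]
    apply Set.iInter_congr
    intro i
    apply Set.iInter_congr
    intro hi
    rw [hZeq i (Finset.mem_range.1 hi)]
  apply Set.Subset.antisymm
  · exact Set.sInter_subset_of_mem hPmem
  · exact Set.subset_sInter fun A hA => le_of_eq (hall A hA).symm

end XiGenAux

/-- For a transitive piecewise monotonic map, the cells `ξ_k(x)` shrink to the point `x`:
for every `x ∈ R`, `⋂_{k ≥ 1} ξ_k(x) = {x}`. -/
theorem iInter_xiCell_eq_singleton
    (T : unitInterval → unitInterval) (N : ℕ) (c : ℕ → unitInterval)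
    (hpm : IsPiecewiseMonotonic T N c) (htr : TransitiveMap T) :
    ∀ x ∈ goodSet T N c, (⋂ k : ℕ, ⋂ (_ : 1 ≤ k), xiCell T N c k x) = {x} := by
  intro x hx
  classical
  have hit : ∀ n : ℕ, ∃ b : ℕ, (1 ≤ b ∧ b ≤ N) ∧ T^[n] x ∈ XiGenAux.Zf c b := by
    intro n
    have h1 := Set.mem_iInter.1 hx n
    rw [Set.mem_preimage, Set.mem_sUnion] at h1
    obtain ⟨Z, ⟨b, hb1, hbN, rfl⟩, hmem⟩ := h1
    exact ⟨b, ⟨hb1, hbN⟩, hmem⟩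
  choose ι hιb hιm using hit
  have hc : StrictMonoOn c (Set.Iic N) := hpm.2.2.2.2.1
  have hcell : ∀ k, xiCell T N c k x = XiGenAux.Pset T c ι k :=
    XiGenAux.xiCell_eq hc ι hιb hιm
  apply Set.Subset.antisymm
  · intro y hy
    have hyfib : y ∈ XiGenAux.Fib T c ι := by
      rw [XiGenAux.mem_Fib]
      intro i
      have h1 : y ∈ xiCell T N c (i + 1) x :=
        Set.mem_iInter.1 (Set.mem_iInter.1 hy (i + 1)) (Nat.le_add_left 1 i)
      rw [hcell (i + 1)] at h1
      exact XiGenAux.mem_Pset.1 h1 i (Nat.lt_succ_self i)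
    have hxfib : x ∈ XiGenAux.Fib T c ι := XiGenAux.mem_Fib.2 hιm
    exact XiGenAux.fib_subsingleton hpm htr ι hιb hyfib hxfib
  · intro y hy
    rw [Set.mem_singleton_iff] at hy
    subst hy
    refine Set.mem_iInter.2 fun k => Set.mem_iInter.2 fun hk => ?_
    exact Set.mem_sInter.2 fun A hA => hA.2
end

section
/- Let T : [0,1] → [0,1] be a transitive piecewise monotonic map and let μ be a T-ergodic T-invariant Borel probability measure that is not a periodic measure. Then the σ-algebra generated by ⋃_{k=1}^∞ ξ_k coincides with the Borel σ-algebra of [0,1] modulo μ-null sets; that is, (ξ_k)_{k≥1} is a generator of the Borel σ-algebra with respect to T and μ. -/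
open MeasureTheory Filter Set
open scoped ENNReal NNReal

/-- `μ` is a periodic measure for `T`: `μ = (1/n) ∑_{j<n} δ_{T^j p}` for some periodic point
`p` of period `n`. -/
def IsPeriodicMeasure (T : unitInterval → unitInterval) (μ : Measure unitInterval) : Prop :=
  ∃ (p : unitInterval) (n : ℕ), 0 < n ∧ T^[n] p = p ∧
    μ = (n : ℝ≥0∞)⁻¹ • ∑ j ∈ Finset.range n, Measure.dirac (T^[j] p)

/-- The set `M_T^per([0,1])` of periodic measures of `T`, inside the space of Borel
probability measures on `[0,1]` with the weak-* topology. -/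
def periodicMeasures (T : unitInterval → unitInterval) :
    Set (ProbabilityMeasure unitInterval) :=
  {ν | IsPeriodicMeasure T ν.toMeasure}




namespace XiAux

variable {T : unitInterval → unitInterval} {N : ℕ} {c : ℕ → unitInterval}

lemma monoAnti_comp {α β γ : Type*} [Preorder α] [Preorder β] [Preorder γ]
    {f : α → β} {g : β → γ} {s : Set α} {t : Set β}
    (hf : MonotoneOn f s ∨ AntitoneOn f s) (hg : MonotoneOn g t ∨ AntitoneOn g t)
    (hm : Set.MapsTo f s t) :
    MonotoneOn (fun u => g (f u)) s ∨ AntitoneOn (fun u => g (f u)) s := by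
  rcases hf with hf | hf <;> rcases hg with hg | hg
  · exact Or.inl fun a ha b hb hab => hg (hm ha) (hm hb) (hf ha hb hab)
  · exact Or.inr fun a ha b hb hab => hg (hm ha) (hm hb) (hf ha hb hab)
  · exact Or.inr fun a ha b hb hab => hg (hm hb) (hm ha) (hf ha hb hab)
  · exact Or.inl fun a ha b hb hab => hg (hm hb) (hm ha) (hf ha hb hab)

def piece (c : ℕ → unitInterval) (m : ℕ) : Set unitInterval := Set.Ioo (c (m - 1)) (c m)

lemma mem_sUnion_xiPart {y : unitInterval} :
    y ∈ ⋃₀ xiPart N c ↔ ∃ i, 1 ≤ i ∧ i ≤ N ∧ y ∈ piece c i := by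
  constructor
  · rintro ⟨Z, ⟨i, h1, h2, rfl⟩, hy⟩; exact ⟨i, h1, h2, hy⟩
  · rintro ⟨i, h1, h2, hy⟩; exact ⟨piece c i, ⟨i, h1, h2, rfl⟩, hy⟩

open scoped Classical in
noncomputable def pidx (N : ℕ) (c : ℕ → unitInterval) (y : unitInterval) : ℕ :=
  if h : ∃ i, 1 ≤ i ∧ i ≤ N ∧ y ∈ piece c i then h.choose else 1

open scoped Classical in
lemma pidx_spec {y : unitInterval} (h : y ∈ ⋃₀ xiPart N c) :
    1 ≤ pidx N c y ∧ pidx N c y ≤ N ∧ y ∈ piece c (pidx N c y) := by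
  rw [mem_sUnion_xiPart] at h
  rw [pidx, dif_pos h]
  exact h.choose_spec

lemma piece_eq_of_mem (hpm : IsPiecewiseMonotonic T N c) {i j : ℕ} {z : unitInterval}
    (h1i : 1 ≤ i) (h2i : i ≤ N) (h1j : 1 ≤ j) (h2j : j ≤ N)
    (hzi : z ∈ piece c i) (hzj : z ∈ piece c j) : i = j := by
  have hmono := hpm.2.2.2.2.1.monotoneOn
  rcases lt_trichotomy i j with h | h | h
  · exfalso
    have hij : c i ≤ c (j - 1) :=
      hmono (Set.mem_Iic.2 h2i) (Set.mem_Iic.2 (by omega)) (by omega)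
    exact absurd (lt_trans (lt_of_lt_of_le hzi.2 hij) hzj.1) (lt_irrefl z)
  · exact h
  · exfalso
    have hij : c j ≤ c (i - 1) :=
      hmono (Set.mem_Iic.2 h2j) (Set.mem_Iic.2 (by omega)) (by omega)
    exact absurd (lt_trans (lt_of_lt_of_le hzj.2 hij) hzi.1) (lt_irrefl z)

lemma mem_goodSet {x : unitInterval} :
    x ∈ goodSet T N c ↔ ∀ n, T^[n] x ∈ ⋃₀ xiPart N c := by
  simp [goodSet]

lemma goodSet_iterate {x : unitInterval} (hx : x ∈ goodSet T N c) (n : ℕ) :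
    T^[n] x ∈ goodSet T N c := by
  rw [mem_goodSet] at hx ⊢
  intro m
  rw [← Function.iterate_add_apply]
  exact hx (m + n)

lemma goodSet_map {x : unitInterval} (hx : x ∈ goodSet T N c) : T x ∈ goodSet T N c := by
  simpa using goodSet_iterate hx 1

lemma good_mem_U {x : unitInterval} (hx : x ∈ goodSet T N c) : x ∈ ⋃₀ xiPart N c := by
  simpa using mem_goodSet.1 hx 0

noncomputable def cellOf (T : unitInterval → unitInterval) (N : ℕ) (c : ℕ → unitInterval)
    (k : ℕ) (x : unitInterval) : Set unitInterval :=
  ⋂ i ∈ Finset.range k, T^[i] ⁻¹' piece c (pidx N c (T^[i] x))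

lemma mem_cellOf {k : ℕ} {x z : unitInterval} :
    z ∈ cellOf T N c k x ↔ ∀ i < k, T^[i] z ∈ piece c (pidx N c (T^[i] x)) := by
  simp [cellOf]

lemma self_mem_cellOf {x : unitInterval} (hx : x ∈ goodSet T N c) (k : ℕ) :
    x ∈ cellOf T N c k x :=
  mem_cellOf.2 fun i _ => (pidx_spec (mem_goodSet.1 hx i)).2.2

lemma cellOf_zero (x : unitInterval) : cellOf T N c 0 x = Set.univ := by simp [cellOf]

lemma cellOf_succ (x : unitInterval) (k : ℕ) :
    cellOf T N c (k + 1) x = piece c (pidx N c x) ∩ T ⁻¹' cellOf T N c k (T x) := by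
  ext z
  simp only [mem_cellOf, Set.mem_inter_iff, Set.mem_preimage]
  constructor
  · intro h
    refine ⟨by simpa using h 0 (Nat.succ_pos k), fun i hi => ?_⟩
    have h2 := h (i + 1) (Nat.succ_lt_succ hi)
    rwa [Function.iterate_succ_apply, Function.iterate_succ_apply] at h2
  · rintro ⟨h0, h⟩ i hi
    cases i with
    | zero => simpa using h0
    | succ i =>
      rw [Function.iterate_succ_apply, Function.iterate_succ_apply]
      exact h i (Nat.lt_of_succ_lt_succ hi)

lemma T_mono_piece (hpm : IsPiecewiseMonotonic T N c) {y : unitInterval}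
    (hy : y ∈ ⋃₀ xiPart N c) :
    MonotoneOn T (piece c (pidx N c y)) ∨ AntitoneOn T (piece c (pidx N c y)) := by
  obtain ⟨h1, h2, _⟩ := pidx_spec hy
  rcases (hpm.2.2.2.2.2 _ h1 h2).1 with h | h
  · exact Or.inl h.monotoneOn
  · exact Or.inr h.antitoneOn

lemma cellOf_shift {x u : unitInterval} (n k : ℕ) (hu : u ∈ cellOf T N c (k + n) x) :
    T^[n] u ∈ cellOf T N c k (T^[n] x) := by
  rw [mem_cellOf] at hu ⊢
  intro i hi
  rw [← Function.iterate_add_apply, ← Function.iterate_add_apply]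
  exact hu (i + n) (by omega)

lemma cellOf_congr (hpm : IsPiecewiseMonotonic T N c) {x y : unitInterval}
    (hx : x ∈ goodSet T N c) (hy : y ∈ goodSet T N c) {k : ℕ}
    (hyx : y ∈ cellOf T N c k x) : cellOf T N c k y = cellOf T N c k x := by
  have hpe : ∀ i, i < k → pidx N c (T^[i] y) = pidx N c (T^[i] x) := by
    intro i hi
    have h1 := pidx_spec (mem_goodSet.1 hy i)
    exact piece_eq_of_mem hpm h1.1 h1.2.1 (pidx_spec (mem_goodSet.1 hx i)).1
      (pidx_spec (mem_goodSet.1 hx i)).2.1 h1.2.2 (mem_cellOf.1 hyx i hi)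
  unfold cellOf
  exact Set.iInter₂_congr fun i hi => by rw [hpe i (Finset.mem_range.1 hi)]

lemma cellOf_ordConnected (hpm : IsPiecewiseMonotonic T N c) {x : unitInterval}
    (hx : x ∈ goodSet T N c) (k : ℕ) : (cellOf T N c k x).OrdConnected := by
  induction k generalizing x with
  | zero => rw [cellOf_zero]; exact Set.ordConnected_univ
  | succ k ih =>
    rw [cellOf_succ]
    constructor
    intro a ha b hb z hz
    have hzp : z ∈ piece c (pidx N c x) := Set.ordConnected_Ioo.out ha.1 hb.1 hz
    refine ⟨hzp, ?_⟩
    rcases T_mono_piece hpm (good_mem_U hx) with hmono | hanti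
    · exact (ih (goodSet_map hx)).out ha.2 hb.2 ⟨hmono ha.1 hzp hz.1, hmono hzp hb.1 hz.2⟩
    · exact (ih (goodSet_map hx)).out hb.2 ha.2 ⟨hanti hzp hb.1 hz.2, hanti ha.1 hzp hz.1⟩

lemma iterate_monoAnti_cellOf (hpm : IsPiecewiseMonotonic T N c) {x : unitInterval}
    (hx : x ∈ goodSet T N c) (k : ℕ) :
    MonotoneOn (T^[k]) (cellOf T N c (k + 1) x) ∨
      AntitoneOn (T^[k]) (cellOf T N c (k + 1) x) := by
  induction k generalizing x with
  | zero => left; intro a _ b _ h; simpa using h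
  | succ k ih =>
    have hsub : cellOf T N c (k + 2) x ⊆ piece c (pidx N c x) := by
      rw [cellOf_succ]; exact Set.inter_subset_left
    have hmaps : Set.MapsTo T (cellOf T N c (k + 2) x) (cellOf T N c (k + 1) (T x)) := by
      intro u hu; rw [cellOf_succ] at hu; exact hu.2
    have hT' : MonotoneOn T (cellOf T N c (k + 2) x) ∨
        AntitoneOn T (cellOf T N c (k + 2) x) :=
      (T_mono_piece hpm (good_mem_U hx)).imp (fun h => h.mono hsub) (fun h => h.mono hsub)
    have hcomp := monoAnti_comp hT' (ih (goodSet_map hx)) hmaps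
    refine hcomp.imp (fun h a ha b hb hab => ?_) (fun h a ha b hb hab => ?_) <;>
    · have h2 := h ha hb hab
      simpa only [Function.iterate_succ_apply] using h2

lemma measurable_cellOf (hpm : IsPiecewiseMonotonic T N c) (k : ℕ) (x : unitInterval) :
    MeasurableSet (cellOf T N c k x) := by
  apply Set.Finite.measurableSet_biInter (Finset.range k).finite_toSet
  intro i _
  exact (hpm.1.iterate i) measurableSet_Ioo

end XiAux

namespace XiAux

variable {T : unitInterval → unitInterval} {N : ℕ} {c : ℕ → unitInterval}

def classOf (T : unitInterval → unitInterval) (N : ℕ) (c : ℕ → unitInterval)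
    (x : unitInterval) : Set unitInterval :=
  ⋂ k : ℕ, cellOf T N c k x

lemma classOf_subset_goodSet {x : unitInterval} (hx : x ∈ goodSet T N c) :
    classOf T N c x ⊆ goodSet T N c := by
  intro z hz
  rw [mem_goodSet]
  intro n
  have h1 := mem_cellOf.1 (Set.mem_iInter.1 hz (n + 1)) n (Nat.lt_succ_self n)
  obtain ⟨a1, a2, _⟩ := pidx_spec (mem_goodSet.1 hx n)
  exact mem_sUnion_xiPart.2 ⟨_, a1, a2, h1⟩

lemma self_mem_classOf {x : unitInterval} (hx : x ∈ goodSet T N c) :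
    x ∈ classOf T N c x :=
  Set.mem_iInter.2 fun k => self_mem_cellOf hx k

lemma classOf_congr (hpm : IsPiecewiseMonotonic T N c) {x z : unitInterval}
    (hx : x ∈ goodSet T N c) (hz : z ∈ classOf T N c x) :
    classOf T N c z = classOf T N c x := by
  have hzg : z ∈ goodSet T N c := classOf_subset_goodSet hx hz
  unfold classOf
  exact Set.iInter_congr fun k => cellOf_congr hpm hx hzg (Set.mem_iInter.1 hz k)

lemma classOf_shift {x : unitInterval} (n : ℕ) :
    Set.MapsTo (T^[n]) (classOf T N c x) (classOf T N c (T^[n] x)) := by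
  intro u hu
  refine Set.mem_iInter.2 fun k => ?_
  exact cellOf_shift n k (Set.mem_iInter.1 hu (k + n))

lemma measurable_classOf (hpm : IsPiecewiseMonotonic T N c) (x : unitInterval) :
    MeasurableSet (classOf T N c x) :=
  MeasurableSet.iInter fun k => measurable_cellOf hpm k x

lemma classOf_subset_cellOf {x : unitInterval} (k : ℕ) :
    classOf T N c x ⊆ cellOf T N c k x := fun _ hw => Set.mem_iInter.1 hw k

lemma compl_sUnion_subset (hpm : IsPiecewiseMonotonic T N c) :
    (⋃₀ xiPart N c)ᶜ ⊆ c '' Set.Iic N := by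
  intro x hx
  by_contra hxc
  have hex : ∃ i, i ≤ N ∧ x ≤ c i := ⟨N, le_refl N, by rw [hpm.2.2.2.1]; exact unitInterval.le_one x⟩
  classical
  obtain ⟨hi0N, hxle⟩ := Nat.find_spec hex
  set i0 := Nat.find hex with hi0
  rcases eq_or_lt_of_le hxle with heq | hlt
  · exact hxc ⟨i0, Set.mem_Iic.2 hi0N, heq.symm⟩
  · rcases Nat.eq_zero_or_pos i0 with h0 | hpos
    · have hc0 : x ≤ c 0 := by rw [← h0]; exact hxle
      have hx0 : x = c 0 := le_antisymm hc0 (by rw [hpm.2.2.1]; exact unitInterval.nonneg' )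
      exact hxc ⟨0, Set.mem_Iic.2 (Nat.zero_le N), hx0.symm⟩
    · have h1 : i0 - 1 ≤ N := by omega
      have h2 : ¬ x ≤ c (i0 - 1) := fun hle => Nat.find_min hex (by omega) ⟨h1, hle⟩
      exact hx (mem_sUnion_xiPart.2 ⟨i0, hpos, hi0N, not_le.1 h2, hlt⟩)

lemma compl_goodSet_null (hpm : IsPiecewiseMonotonic T N c)
    {μ : Measure unitInterval} [IsProbabilityMeasure μ] [NullSingletonClass μ]
    (hm : MeasurePreserving T μ μ) : μ (goodSet T N c)ᶜ = 0 := by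
  rw [goodSet, Set.compl_iInter]
  refine measure_iUnion_null fun n => ?_
  rw [← Set.preimage_compl]
  have hfin : (c '' Set.Iic N).Finite := (Set.finite_Iic N).image c
  refine measure_mono_null (Set.preimage_mono (compl_sUnion_subset hpm)) ?_
  rw [(hm.iterate n).measure_preimage hfin.measurableSet.nullMeasurableSet]
  exact hfin.measure_zero μ

end XiAux

namespace XiAux

variable {T : unitInterval → unitInterval} {N : ℕ} {c : ℕ → unitInterval}

def jfun {N k : ℕ} (j : Fin k → Fin (N + 1)) : ℕ → ℕ :=
  fun i => if h : i < k then (j ⟨i, h⟩ : ℕ) else 0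

def cellF (T : unitInterval → unitInterval) (c : ℕ → unitInterval) (k : ℕ) (j : ℕ → ℕ) :
    Set unitInterval :=
  ⋂ i ∈ Finset.range k, T^[i] ⁻¹' piece c (j i)

def AsetCond (T : unitInterval → unitInterval) (N : ℕ) (c : ℕ → unitInterval) (t : unitInterval)
    (p : Σ k : ℕ, Fin k → Fin (N + 1)) : Prop :=
  1 ≤ p.1 ∧ (∀ i < p.1, 1 ≤ jfun p.2 i ∧ jfun p.2 i ≤ N) ∧
    (cellF T c p.1 (jfun p.2)).Nonempty ∧ cellF T c p.1 (jfun p.2) ⊆ Set.Iio t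

def Aset (T : unitInterval → unitInterval) (N : ℕ) (c : ℕ → unitInterval) (t : unitInterval) :
    Set unitInterval :=
  ⋃ (p : Σ k : ℕ, Fin k → Fin (N + 1)) (_ : AsetCond T N c t p), cellF T c p.1 (jfun p.2)

lemma Aset_measurable_gen (t : unitInterval) :
    MeasurableSet[MeasurableSpace.generateFrom
      {A : Set unitInterval | ∃ k : ℕ, 1 ≤ k ∧ A ∈ xiRef T N c k}] (Aset T N c t) := by
  apply MeasurableSet.iUnion
  intro p
  apply MeasurableSet.iUnion
  intro hp
  apply MeasurableSpace.measurableSet_generateFrom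
  refine ⟨p.1, hp.1, hp.2.2.1, fun i => piece c (jfun p.2 i), fun i hi => ?_, rfl⟩
  obtain ⟨h1, h2⟩ := hp.2.1 i hi
  exact ⟨jfun p.2 i, h1, h2, rfl⟩

lemma Aset_subset_Iio (t : unitInterval) : Aset T N c t ⊆ Set.Iio t :=
  Set.iUnion₂_subset fun _ hp => hp.2.2.2

lemma mem_Aset_of_cell {x t : unitInterval} (hx : x ∈ goodSet T N c) {k : ℕ} (hk : 1 ≤ k)
    (hsub : cellOf T N c k x ⊆ Set.Iio t) : x ∈ Aset T N c t := by
  have hb : ∀ i : ℕ, 1 ≤ pidx N c (T^[i] x) ∧ pidx N c (T^[i] x) ≤ N := fun i =>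
    ⟨(pidx_spec (mem_goodSet.1 hx i)).1, (pidx_spec (mem_goodSet.1 hx i)).2.1⟩
  set j : Fin k → Fin (N + 1) := fun i => ⟨pidx N c (T^[(i : ℕ)] x), Nat.lt_succ_of_le (hb i).2⟩
    with hj
  have hjf : ∀ i, i < k → jfun j i = pidx N c (T^[i] x) := by
    intro i hik
    simp only [jfun, dif_pos hik, hj]
  have hcell : cellF T c k (jfun j) = cellOf T N c k x := by
    unfold cellF cellOf
    exact Set.iInter₂_congr fun i hi => by rw [hjf i (Finset.mem_range.1 hi)]
  have hcond : AsetCond T N c t ⟨k, j⟩ := by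
    refine ⟨hk, fun i hik => ?_, ?_, ?_⟩
    · rw [hjf i hik]; exact hb i
    · rw [hcell]; exact ⟨x, self_mem_cellOf hx k⟩
    · rw [hcell]; exact hsub
  exact Set.mem_iUnion.2 ⟨⟨k, j⟩, Set.mem_iUnion.2 ⟨hcond, by rw [hcell]; exact self_mem_cellOf hx k⟩⟩

lemma cell_not_subset {x t : unitInterval} (hx : x ∈ goodSet T N c)
    (hxA : x ∉ Aset T N c t) (k : ℕ) : ∃ z ∈ cellOf T N c k x, t ≤ z := by
  by_contra h
  push_neg at h
  have hsub : cellOf T N c k x ⊆ Set.Iio t := fun z hz => h z hz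
  rcases Nat.eq_zero_or_pos k with rfl | hk
  · have ht : t ∈ cellOf T N c 0 x := by rw [cellOf_zero]; trivial
    exact lt_irrefl t (hsub ht)
  · exact hxA (mem_Aset_of_cell hx hk hsub)

lemma exists_small_set (μ : Measure unitInterval) [IsProbabilityMeasure μ] [NullSingletonClass μ]
    {ε : ℝ≥0∞} (hε : 0 < ε) :
    ∃ B : Set unitInterval, MeasurableSet B ∧ 0 < μ B ∧ μ B < ε := by
  set f : ℝ → Set unitInterval := fun r => {x : unitInterval | (x : ℝ) ≤ r} with hf
  have hfm : ∀ r, MeasurableSet (f r) := fun r =>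
    measurable_subtype_coe measurableSet_Iic
  have hfmono : ∀ ⦃r s : ℝ⦄, r ≤ s → f r ⊆ f s := fun r s hrs x hx => le_trans hx hrs
  set A : Set ℝ := {r : ℝ | 0 < μ (f r)} with hA
  have hA1 : (1 : ℝ) ∈ A := by
    have : f 1 = Set.univ := by
      ext x; simpa [hf] using x.2.2
    simp [hA, this]
  have hAne : A.Nonempty := ⟨1, hA1⟩
  have hAbdd : BddBelow A := by
    refine ⟨0, fun r hr => ?_⟩
    by_contra hr0
    push_neg at hr0
    have : f r = ∅ := by
      ext x
      simp only [hf, Set.mem_setOf_eq, Set.mem_empty_iff_false, iff_false, not_le]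
      exact lt_of_lt_of_le hr0 x.2.1
    rw [hA, Set.mem_setOf_eq, this] at hr
    simp at hr
  set s := sInf A with hs
  have hfs0 : μ (f s) = 0 := by
    have hlt : μ {x : unitInterval | (x : ℝ) < s} = 0 := by
      have hcup : {x : unitInterval | (x : ℝ) < s} = ⋃ n : ℕ, f (s - 1 / (n + 1)) := by
        ext x
        simp only [Set.mem_setOf_eq, Set.mem_iUnion, hf]
        constructor
        · intro hx
          obtain ⟨n, hn⟩ := exists_nat_one_div_lt (sub_pos.2 hx)
          exact ⟨n, by push_cast at hn ⊢; linarith⟩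
        · rintro ⟨n, hn⟩
          have : (0:ℝ) < 1 / (n + 1) := by positivity
          linarith
      rw [hcup]
      refine measure_iUnion_null fun n => ?_
      by_contra hpos
      have hmem : s - 1 / (n + 1) ∈ A := pos_iff_ne_zero.2 hpos
      have := csInf_le hAbdd hmem
      have hpos' : (0:ℝ) < 1 / ((n:ℝ) + 1) := by positivity
      rw [← hs] at this
      linarith
    have heq : μ {x : unitInterval | (x : ℝ) = s} = 0 := by
      apply Set.Subsingleton.measure_zero
      intro a ha b hb
      exact Subtype.ext (ha.trans hb.symm)
    have hsub : f s ⊆ {x : unitInterval | (x : ℝ) < s} ∪ {x : unitInterval | (x : ℝ) = s} := by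
      intro x hx
      have hx' : (x : ℝ) ≤ s := hx
      rcases lt_or_eq_of_le hx' with h | h
      · exact Or.inl h
      · exact Or.inr h
    exact measure_mono_null hsub (by rw [← le_zero_iff]; exact le_trans (measure_union_le _ _) (by rw [hlt, heq, add_zero])) 
  have hiInf : μ (f s) = ⨅ n : ℕ, μ (f (s + 1 / (n + 1))) := by
    have hcap : f s = ⋂ n : ℕ, f (s + 1 / (n + 1)) := by
      ext x
      simp only [hf, Set.mem_setOf_eq, Set.mem_iInter]
      constructor
      · intro hx n
        have : (0:ℝ) < 1 / ((n:ℝ) + 1) := by positivity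
        linarith
      · intro hx
        by_contra hcon
        push_neg at hcon
        obtain ⟨n, hn⟩ := exists_nat_one_div_lt (sub_pos.2 hcon)
        have := hx n
        push_cast at hn this ⊢
        linarith
    rw [hcap]
    refine Antitone.measure_iInter (fun a b hab => ?_) (fun n => (hfm _).nullMeasurableSet) ⟨0, measure_ne_top μ _⟩
    apply hfmono
    have hba : ((a:ℝ)) ≤ (b:ℝ) := by exact_mod_cast hab
    have : (1:ℝ) / ((b:ℝ) + 1) ≤ 1 / ((a:ℝ) + 1) := by
      apply one_div_le_one_div_of_le
      · positivity
      · linarith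
    linarith
  have hex : ∃ n : ℕ, μ (f (s + 1 / (n + 1))) < ε := by
    by_contra hcon
    push_neg at hcon
    have : ε ≤ μ (f s) := by rw [hiInf]; exact le_iInf hcon
    rw [hfs0] at this
    exact absurd this (by simpa using hε.ne')
  obtain ⟨n, hn⟩ := hex
  refine ⟨f (s + 1 / (n + 1)), hfm _, ?_, hn⟩
  have hδ : (0:ℝ) < 1 / ((n:ℝ) + 1) := by positivity
  obtain ⟨r, hrA, hrlt⟩ := exists_lt_of_csInf_lt hAne (by rw [← hs]; linarith : sInf A < s + 1 / (n + 1))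
  exact lt_of_lt_of_le hrA (measure_mono (hfmono (le_of_lt hrlt)))

end XiAux

namespace XiAux

variable {T : unitInterval → unitInterval}

lemma measure_finset_eq_sum (μ : Measure unitInterval) (S : Finset unitInterval) :
    μ ↑S = ∑ y ∈ S, μ {y} := by
  have hU : (↑S : Set unitInterval) = ⋃ y ∈ S, {y} := by
    ext z
    simp only [Set.mem_iUnion, Set.mem_singleton_iff, Finset.mem_coe]
    exact ⟨fun hz => ⟨z, hz, rfl⟩, fun ⟨i, hi, hz⟩ => hz ▸ hi⟩
  rw [hU, measure_biUnion_finset ?_ (fun y _ => measurableSet_singleton y)]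
  intro y _ z _ hyz
  simp only [Function.onFun, Set.disjoint_singleton_left, Set.mem_singleton_iff]
  exact hyz

lemma periodic_of_atom {μ : Measure unitInterval} [IsProbabilityMeasure μ]
    (herg : Ergodic T μ) {x : unitInterval} (hx : μ {x} ≠ 0) : IsPeriodicMeasure T μ := by
  classical
  have hchain : ∀ (y : unitInterval) (j : ℕ), μ {y} ≤ μ {T^[j] y} := by
    intro y j
    induction j with
    | zero => simp
    | succ j ih =>
      refine le_trans ih ?_
      have hsub : ({T^[j] y} : Set unitInterval) ⊆ T ⁻¹' {T^[j+1] y} := by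
        intro w hw
        rw [Set.mem_singleton_iff] at hw
        subst hw
        simp [Set.mem_preimage, ← Function.iterate_succ_apply']
      calc μ {T^[j] y} ≤ μ (T ⁻¹' {T^[j+1] y}) := measure_mono hsub
        _ = μ {T^[j+1] y} := herg.toMeasurePreserving.measure_preimage
            (measurableSet_singleton _).nullMeasurableSet
  set a := μ {x} with ha
  have hFfin : {y : unitInterval | a ≤ μ {y}}.Finite := by
    rw [← Set.not_infinite]
    intro hinf
    set e := Set.Infinite.natEmbedding _ hinf
    have hdisj : Pairwise (Function.onFun Disjoint fun n : ℕ => ({(e n : unitInterval)} : Set unitInterval)) := by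
      intro n m hnm
      simp only [Function.onFun, Set.disjoint_singleton_left, Set.mem_singleton_iff]
      exact fun h => hnm (e.injective (Subtype.ext h))
    have h1 : μ (⋃ n : ℕ, ({(e n : unitInterval)} : Set unitInterval)) = ∑' n : ℕ, μ {(e n : unitInterval)} :=
      measure_iUnion hdisj fun n => measurableSet_singleton _
    have h2 : (⊤ : ℝ≥0∞) ≤ μ (⋃ n : ℕ, ({(e n : unitInterval)} : Set unitInterval)) := by
      have htop : (⊤ : ℝ≥0∞) = ∑' _ : ℕ, a :=
        (ENNReal.tsum_const_eq_top_of_ne_zero hx).symm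
      rw [h1, htop]
      exact ENNReal.tsum_le_tsum fun n => (e n).2
    have h3 : μ (⋃ n : ℕ, ({(e n : unitInterval)} : Set unitInterval)) ≤ 1 :=
      prob_le_one
    rw [top_le_iff] at h2
    rw [h2] at h3
    simp at h3
  have hmem : ∀ n : ℕ, T^[n] x ∈ {y : unitInterval | a ≤ μ {y}} := fun n => hchain x n
  haveI := hFfin.to_subtype
  obtain ⟨j, k, hjk, heq⟩ := Finite.exists_ne_map_eq_of_infinite
    (fun n : ℕ => (⟨T^[n] x, hmem n⟩ : {y : unitInterval | a ≤ μ {y}}))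
  have heq' : T^[j] x = T^[k] x := by simpa using congrArg Subtype.val heq
  -- wlog j < k
  obtain ⟨j0, k0, hjk0, heq0⟩ : ∃ j0 k0 : ℕ, j0 < k0 ∧ T^[j0] x = T^[k0] x := by
    rcases Nat.lt_or_ge j k with h | h
    · exact ⟨j, k, h, heq'⟩
    · exact ⟨k, j, by omega, heq'.symm⟩
  obtain ⟨p, hper, hap⟩ : ∃ p : unitInterval, T^[k0 - j0] p = p ∧ a ≤ μ {p} :=
    ⟨T^[j0] x, by rw [← Function.iterate_add_apply, (by omega : k0 - j0 + j0 = k0)]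
                  exact heq0.symm,
      hchain x j0⟩
  have hQ : ∃ n, 0 < n ∧ T^[n] p = p := ⟨k0 - j0, by omega, hper⟩
  obtain ⟨d, hd0, hdper, hdmin⟩ :
      ∃ d : ℕ, 0 < d ∧ T^[d] p = p ∧ ∀ m < d, ¬(0 < m ∧ T^[m] p = p) :=
    ⟨Nat.find hQ, (Nat.find_spec hQ).1, (Nat.find_spec hQ).2, fun m hm => Nat.find_min hQ hm⟩
  -- masses equal along orbit of p
  have hb : ∀ i : ℕ, μ {T^[i] p} = μ {p} := by
    intro i
    refine le_antisymm ?_ (hchain p i)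
    have hlt : i < d * (i + 1) := lt_of_lt_of_le (Nat.lt_succ_self i) (Nat.le_mul_of_pos_left _ hd0)
    have hdi : T^[d * (i + 1)] p = p := by
      rw [Function.iterate_mul]
      exact Function.iterate_fixed hdper (i + 1)
    have h1 := hchain (T^[i] p) (d * (i + 1) - i)
    rw [← Function.iterate_add_apply, Nat.sub_add_cancel (le_of_lt hlt), hdi] at h1
    exact h1
  -- injectivity below d
  have hkey : ∀ i j : ℕ, i < j → j < d → T^[i] p = T^[j] p → False := by
    intro i j hij hjd he
    have h1 : T^[d - j] (T^[i] p) = T^[d - j] (T^[j] p) := by rw [he]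
    rw [← Function.iterate_add_apply, ← Function.iterate_add_apply,
      (Nat.sub_add_cancel (le_of_lt hjd) : d - j + j = d), hdper] at h1
    exact hdmin (d - j + i) (by omega) ⟨by omega, h1⟩
  have hinj : Set.InjOn (fun i : ℕ => T^[i] p) ↑(Finset.range d) := by
    intro i hi j hj he
    simp only [Finset.coe_range, Set.mem_Iio] at hi hj
    by_contra hne
    rcases Nat.lt_or_ge i j with h | h
    · exact hkey i j h hj he
    · exact hkey j i (by omega) hi he.symm
  set S : Finset unitInterval := (Finset.range d).image (fun i => T^[i] p) with hS
  have hmemS : ∀ i : ℕ, T^[i] p ∈ S := by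
    intro i
    have hmod : T^[i] p = T^[i % d] p := by
      conv_lhs => rw [← Nat.mod_add_div i d]
      rw [Function.iterate_add_apply, Function.iterate_mul, Function.iterate_fixed hdper]
    rw [hmod]
    exact Finset.mem_image.2 ⟨i % d, Finset.mem_range.2 (Nat.mod_lt _ hd0), rfl⟩
  have hTS : ∀ y ∈ S, T y ∈ S := by
    intro y hy
    obtain ⟨i, _, rfl⟩ := Finset.mem_image.1 hy
    have hstep : T (T^[i] p) = T^[i + 1] p := (Function.iterate_succ_apply' T i p).symm
    rw [hstep]
    exact hmemS (i + 1)
  have hSmeas : MeasurableSet (↑S : Set unitInterval) := S.measurableSet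
  have hSmu : μ ↑S = (d : ℝ≥0∞) * μ {p} := by
    rw [measure_finset_eq_sum, hS, Finset.sum_image (fun i hi j hj he => hinj hi hj he)]
    rw [Finset.sum_congr rfl (fun i _ => hb i), Finset.sum_const, Finset.card_range,
      nsmul_eq_mul]
  have hpre : (↑S : Set unitInterval) ⊆ T ⁻¹' ↑S := fun y hy => hTS y hy
  have hS1 : μ ↑S = 1 := by
    rcases herg.ae_empty_or_univ_of_ae_le_preimage hSmeas.nullMeasurableSet
        hpre.eventuallyLE with h0 | h1
    · exfalso
      have hp_in : p ∈ (↑S : Set unitInterval) := by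
        have := hmemS 0
        simpa using this
      have : μ {p} ≤ μ ↑S := measure_mono (Set.singleton_subset_iff.2 hp_in)
      rw [measure_congr h0, measure_empty] at this
      exact hx (le_antisymm (le_trans hap this) zero_le)
    · rw [measure_congr h1, measure_univ]
  have hdne : (d : ℝ≥0∞) ≠ 0 := Nat.cast_ne_zero.2 (by omega)
  have hdtop : (d : ℝ≥0∞) ≠ ⊤ := ENNReal.natCast_ne_top d
  have hbinv : μ {p} = (d : ℝ≥0∞)⁻¹ := by
    have hd1 : (d : ℝ≥0∞) * μ {p} = 1 := by rw [← hSmu, hS1]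
    calc μ {p} = (d : ℝ≥0∞)⁻¹ * ((d : ℝ≥0∞) * μ {p}) := by
          rw [← mul_assoc, ENNReal.inv_mul_cancel hdne hdtop, one_mul]
      _ = (d : ℝ≥0∞)⁻¹ := by rw [hd1, mul_one]
  refine ⟨p, d, hd0, hdper, ?_⟩
  refine Measure.ext fun E hE => ?_
  have hScompl : μ (↑S : Set unitInterval)ᶜ = 0 := by
    have := measure_compl hSmeas (measure_ne_top μ _)
    rw [hS1, measure_univ] at this
    simpa using this
  have hES : μ E = μ (E ∩ ↑S) := by
    have hsplit := measure_inter_add_diff (μ := μ) E hSmeas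
    have hdiff : μ (E \ ↑S) = 0 := measure_mono_null (Set.diff_subset_compl E ↑S) hScompl
    rw [hdiff, add_zero] at hsplit
    exact hsplit.symm
  have hfilter : E ∩ ↑S = ↑(S.filter (· ∈ E)) := by
    ext z
    simp [and_comm]
  have hcard : (S.filter (· ∈ E)).card = ((Finset.range d).filter (fun j => T^[j] p ∈ E)).card := by
    rw [hS, Finset.filter_image]
    exact Finset.card_image_of_injOn (hinj.mono (Finset.coe_subset.2 (Finset.filter_subset _ _)))
  have hleft : μ E = ((S.filter (· ∈ E)).card : ℝ≥0∞) * (d : ℝ≥0∞)⁻¹ := by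
    rw [hES, hfilter, measure_finset_eq_sum]
    have hval : ∀ y ∈ S.filter (· ∈ E), μ {y} = (d : ℝ≥0∞)⁻¹ := by
      intro y hy
      obtain ⟨i, _, rfl⟩ := Finset.mem_image.1 (Finset.mem_of_mem_filter y hy)
      rw [hb i, hbinv]
    rw [Finset.sum_congr rfl hval, Finset.sum_const, nsmul_eq_mul]
  have hright : ((d : ℝ≥0∞)⁻¹ • ∑ j ∈ Finset.range d, Measure.dirac (T^[j] p)) E
      = (((Finset.range d).filter (fun j => T^[j] p ∈ E)).card : ℝ≥0∞) * (d : ℝ≥0∞)⁻¹ := by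
    rw [Measure.smul_apply, Measure.finset_sum_apply]
    have : ∀ j ∈ Finset.range d, Measure.dirac (T^[j] p) E = if T^[j] p ∈ E then 1 else 0 := by
      intro j _
      rw [Measure.dirac_apply' _ hE]
      simp [Set.indicator_apply]
    rw [Finset.sum_congr rfl this, Finset.sum_boole]
    simp [mul_comm]
  rw [hleft, hright, hcard]

end XiAux

namespace XiAux

variable {T : unitInterval → unitInterval} {N : ℕ} {c : ℕ → unitInterval}

lemma key (hpm : IsPiecewiseMonotonic T N c) {μ : Measure unitInterval}
    [IsProbabilityMeasure μ] [NullSingletonClass μ] (herg : Ergodic T μ) (t : unitInterval) :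
    μ (Set.Iio t \ Aset T N c t) = 0 := by
  by_contra h0
  have hgood : μ (goodSet T N c)ᶜ = 0 := compl_goodSet_null hpm herg.toMeasurePreserving
  have hDD : μ ((Set.Iio t \ Aset T N c t) ∩ goodSet T N c) ≠ 0 := by
    intro hz
    apply h0
    have hsub : Set.Iio t \ Aset T N c t ⊆
        ((Set.Iio t \ Aset T N c t) ∩ goodSet T N c) ∪ (goodSet T N c)ᶜ := by
      intro w hw
      by_cases hwg : w ∈ goodSet T N c
      · exact Or.inl ⟨hw, hwg⟩
      · exact Or.inr hwg
    refine measure_mono_null hsub ?_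
    have hle := measure_union_le (μ := μ) ((Set.Iio t \ Aset T N c t) ∩ goodSet T N c)
      (goodSet T N c)ᶜ
    rw [hz, hgood, add_zero] at hle
    exact le_antisymm hle zero_le
  obtain ⟨y, hyD, hyg⟩ := nonempty_of_measure_ne_zero hDD
  have hyt : y ∈ Set.Iio t := hyD.1
  have hyA : y ∉ Aset T N c t := hyD.2
  have hsubK : (Set.Iio t \ Aset T N c t) ∩ goodSet T N c ⊆ classOf T N c y := by
    rintro x ⟨⟨hxt, hxA⟩, hxg⟩
    refine Set.mem_iInter.2 fun k => ?_
    rcases le_total x y with hxy | hyx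
    · obtain ⟨z, hz, htz⟩ := cell_not_subset hxg hxA k
      have hy_in : y ∈ cellOf T N c k x :=
        (cellOf_ordConnected hpm hxg k).out (self_mem_cellOf hxg k) hz
          ⟨hxy, le_trans (le_of_lt hyt) htz⟩
      rw [cellOf_congr hpm hxg hyg hy_in]
      exact self_mem_cellOf hxg k
    · obtain ⟨z, hz, htz⟩ := cell_not_subset hyg hyA k
      exact (cellOf_ordConnected hpm hyg k).out (self_mem_cellOf hyg k) hz
        ⟨hyx, le_trans (le_of_lt hxt) htz⟩
  have hKm : MeasurableSet (classOf T N c y) := measurable_classOf hpm y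
  have hKpos : μ (classOf T N c y) ≠ 0 := fun hz => hDD (measure_mono_null hsubK hz)
  obtain ⟨z, hzK, n, hn0, hznK⟩ :=
    (herg.toMeasurePreserving.conservative).exists_mem_iterate_mem' hKm hKpos
  have hzg : z ∈ goodSet T N c := classOf_subset_goodSet hyg hzK
  have hKz : classOf T N c z = classOf T N c y := classOf_congr hpm hyg hzK
  have hmaps : Set.MapsTo (T^[n]) (classOf T N c y) (classOf T N c y) := by
    intro w hw
    rw [← hKz] at hw
    have h1 : T^[n] w ∈ classOf T N c (T^[n] z) := classOf_shift n hw
    rwa [classOf_congr hpm hyg hznK] at h1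
  have hKsubcell : classOf T N c y ⊆ cellOf T N c (n + 1) z := by
    rw [← hKz]; exact classOf_subset_cellOf (n + 1)
  obtain ⟨m, hm0, hmmono, hmmaps⟩ :
      ∃ m : ℕ, m ≠ 0 ∧ MonotoneOn (T^[m]) (classOf T N c y) ∧
        Set.MapsTo (T^[m]) (classOf T N c y) (classOf T N c y) := by
    rcases iterate_monoAnti_cellOf hpm hzg n with hmono | hanti
    · exact ⟨n, hn0, hmono.mono hKsubcell, hmaps⟩
    · have hanti' : AntitoneOn (T^[n]) (classOf T N c y) := hanti.mono hKsubcell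
      refine ⟨n + n, by omega, ?_, ?_⟩
      · intro a ha b hb hab
        have h2 : T^[n] (T^[n] a) ≤ T^[n] (T^[n] b) :=
          hanti' (hmaps hb) (hmaps ha) (hanti' ha hb hab)
        rwa [← Function.iterate_add_apply, ← Function.iterate_add_apply] at h2
      · intro w hw
        rw [Function.iterate_add_apply]
        exact hmaps (hmaps hw)
  have hgm : Measurable (T^[m]) := hpm.1.iterate m
  have hgp : MeasurePreserving (T^[m]) μ μ := herg.toMeasurePreserving.iterate m
  have hplus : ∀ q : ℚ, μ (classOf T N c y ∩ (fun w : unitInterval => (w : ℝ)) ⁻¹' Set.Iio (q : ℝ)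
      ∩ T^[m] ⁻¹' ((fun w : unitInterval => (w : ℝ)) ⁻¹' Set.Ioi (q : ℝ))) = 0 := by
    intro q
    by_contra hq
    have hSm : MeasurableSet (classOf T N c y ∩ (fun w : unitInterval => (w : ℝ)) ⁻¹' Set.Iio (q : ℝ)
        ∩ T^[m] ⁻¹' ((fun w : unitInterval => (w : ℝ)) ⁻¹' Set.Ioi (q : ℝ))) :=
      (hKm.inter (measurable_subtype_coe measurableSet_Iio)).inter
        (hgm (measurable_subtype_coe measurableSet_Ioi))
    obtain ⟨w, hwS, l, hl0, hlS⟩ := hgp.conservative.exists_mem_iterate_mem' hSm hq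
    have hwK : w ∈ classOf T N c y := hwS.1.1
    have hwq : (w : ℝ) < q := hwS.1.2
    have hqw : (q : ℝ) < (T^[m] w : ℝ) := hwS.2
    have horb : ∀ i : ℕ, (T^[m])^[i] w ∈ classOf T N c y := fun i => hmmaps.iterate i hwK
    have hstep : ∀ i : ℕ, (T^[m])^[i] w ≤ (T^[m])^[i + 1] w := by
      intro i
      induction i with
      | zero =>
        simp only [Function.iterate_zero, id_eq, Function.iterate_one]
        exact le_of_lt (Subtype.coe_lt_coe.1 (lt_trans hwq hqw))
      | succ i ih =>
        have h2 := hmmono (horb i) (horb (i + 1)) ih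
        have e1 : T^[m] ((T^[m])^[i] w) = (T^[m])^[i + 1] w :=
          (Function.iterate_succ_apply' (T^[m]) i w).symm
        have e2 : T^[m] ((T^[m])^[i + 1] w) = (T^[m])^[i + 2] w :=
          (Function.iterate_succ_apply' (T^[m]) (i + 1) w).symm
        rw [e1, e2] at h2
        exact h2
    have hchain2 : ∀ i : ℕ, T^[m] w ≤ (T^[m])^[i + 1] w := by
      intro i
      induction i with
      | zero => simp
      | succ i ih => exact le_trans ih (hstep (i + 1))
    obtain ⟨l', rfl⟩ : ∃ l', l = l' + 1 := ⟨l - 1, by omega⟩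
    have hcontr1 : ((T^[m])^[l' + 1] w : ℝ) < q := hlS.1.2
    have hcontr2 : (q : ℝ) < ((T^[m])^[l' + 1] w : ℝ) :=
      lt_of_lt_of_le hqw (Subtype.coe_le_coe.2 (hchain2 l'))
    linarith
  have hminus : ∀ q : ℚ, μ (classOf T N c y ∩ (fun w : unitInterval => (w : ℝ)) ⁻¹' Set.Ioi (q : ℝ)
      ∩ T^[m] ⁻¹' ((fun w : unitInterval => (w : ℝ)) ⁻¹' Set.Iio (q : ℝ))) = 0 := by
    intro q
    by_contra hq
    have hSm : MeasurableSet (classOf T N c y ∩ (fun w : unitInterval => (w : ℝ)) ⁻¹' Set.Ioi (q : ℝ)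
        ∩ T^[m] ⁻¹' ((fun w : unitInterval => (w : ℝ)) ⁻¹' Set.Iio (q : ℝ))) :=
      (hKm.inter (measurable_subtype_coe measurableSet_Ioi)).inter
        (hgm (measurable_subtype_coe measurableSet_Iio))
    obtain ⟨w, hwS, l, hl0, hlS⟩ := hgp.conservative.exists_mem_iterate_mem' hSm hq
    have hwK : w ∈ classOf T N c y := hwS.1.1
    have hwq : (q : ℝ) < (w : ℝ) := hwS.1.2
    have hqw : (T^[m] w : ℝ) < q := hwS.2
    have horb : ∀ i : ℕ, (T^[m])^[i] w ∈ classOf T N c y := fun i => hmmaps.iterate i hwK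
    have hstep : ∀ i : ℕ, (T^[m])^[i + 1] w ≤ (T^[m])^[i] w := by
      intro i
      induction i with
      | zero =>
        simp only [Function.iterate_zero, id_eq, Function.iterate_one]
        exact le_of_lt (Subtype.coe_lt_coe.1 (lt_trans hqw hwq))
      | succ i ih =>
        have h2 := hmmono (horb (i + 1)) (horb i) ih
        have e1 : T^[m] ((T^[m])^[i] w) = (T^[m])^[i + 1] w :=
          (Function.iterate_succ_apply' (T^[m]) i w).symm
        have e2 : T^[m] ((T^[m])^[i + 1] w) = (T^[m])^[i + 2] w :=
          (Function.iterate_succ_apply' (T^[m]) (i + 1) w).symm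
        rw [e1, e2] at h2
        exact h2
    have hchain2 : ∀ i : ℕ, (T^[m])^[i + 1] w ≤ T^[m] w := by
      intro i
      induction i with
      | zero => simp
      | succ i ih => exact le_trans (hstep (i + 1)) ih
    obtain ⟨l', rfl⟩ : ∃ l', l = l' + 1 := ⟨l - 1, by omega⟩
    have hcontr1 : (q : ℝ) < ((T^[m])^[l' + 1] w : ℝ) := hlS.1.2
    have hcontr2 : ((T^[m])^[l' + 1] w : ℝ) < q :=
      lt_of_le_of_lt (Subtype.coe_le_coe.2 (hchain2 l')) hqw
    linarith
  have hKP : μ (classOf T N c y \ {w : unitInterval | T^[m] w = w}) = 0 := by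
    have hsubdiff : classOf T N c y \ {w : unitInterval | T^[m] w = w} ⊆
        (⋃ q : ℚ, classOf T N c y ∩ (fun w : unitInterval => (w : ℝ)) ⁻¹' Set.Iio (q : ℝ)
          ∩ T^[m] ⁻¹' ((fun w : unitInterval => (w : ℝ)) ⁻¹' Set.Ioi (q : ℝ))) ∪
        (⋃ q : ℚ, classOf T N c y ∩ (fun w : unitInterval => (w : ℝ)) ⁻¹' Set.Ioi (q : ℝ)
          ∩ T^[m] ⁻¹' ((fun w : unitInterval => (w : ℝ)) ⁻¹' Set.Iio (q : ℝ))) := by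
      rintro w ⟨hwK, hwP⟩
      have hne : T^[m] w ≠ w := hwP
      rcases lt_or_gt_of_ne hne with hlt | hgt
      · obtain ⟨q, h1, h2⟩ := exists_rat_btwn (Subtype.coe_lt_coe.2 hlt)
        exact Or.inr (Set.mem_iUnion.2 ⟨q, ⟨hwK, h2⟩, h1⟩)
      · obtain ⟨q, h1, h2⟩ := exists_rat_btwn (Subtype.coe_lt_coe.2 hgt)
        exact Or.inl (Set.mem_iUnion.2 ⟨q, ⟨hwK, h1⟩, h2⟩)
    refine measure_mono_null hsubdiff ?_
    rw [← le_zero_iff]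
    refine le_trans (measure_union_le _ _) ?_
    rw [measure_iUnion_null hplus, measure_iUnion_null hminus, add_zero]
  have hPm : MeasurableSet {w : unitInterval | T^[m] w = w} :=
    hgm.stronglyMeasurable.measurableSet_eq_fun stronglyMeasurable_id
  have hPpos : μ {w : unitInterval | T^[m] w = w} ≠ 0 := by
    intro h0'
    apply hKpos
    have hsplit : classOf T N c y ⊆
        (classOf T N c y \ {w : unitInterval | T^[m] w = w}) ∪ {w : unitInterval | T^[m] w = w} := by
      intro w hw
      by_cases hp : w ∈ {w : unitInterval | T^[m] w = w}
      · exact Or.inr hp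
      · exact Or.inl ⟨hw, hp⟩
    refine measure_mono_null hsplit ?_
    rw [← le_zero_iff]
    refine le_trans (measure_union_le _ _) ?_
    rw [hKP, h0', add_zero]
  have hPsub : {w : unitInterval | T^[m] w = w} ⊆ T ⁻¹' {w : unitInterval | T^[m] w = w} := by
    intro w hw
    have hw' : T^[m] w = w := hw
    show T^[m] (T w) = T w
    have e1 : T^[m] (T w) = T (T^[m] w) := by
      rw [← Function.iterate_succ_apply, Function.iterate_succ_apply']
    rw [e1, hw']
  rcases herg.ae_empty_or_univ_of_ae_le_preimage hPm.nullMeasurableSet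
      hPsub.eventuallyLE with hP0 | hP1
  · refine hPpos ?_
    rw [← measure_empty (μ := μ)]
    exact measure_congr hP0
  · have hPc : μ ({w : unitInterval | T^[m] w = w}ᶜ) = 0 := by
      have h2 := measure_compl hPm (measure_ne_top μ _)
      rw [measure_congr hP1, measure_univ] at h2
      simpa using h2
    obtain ⟨B, hBm, hB0, hBlt⟩ := exists_small_set μ
      (ENNReal.inv_pos.2 (ENNReal.natCast_ne_top m) : (0:ℝ≥0∞) < (m : ℝ≥0∞)⁻¹)
    have hBtm : MeasurableSet (⋃ j ∈ Finset.range m, T^[j] ⁻¹' B) :=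
      (Finset.range m).measurableSet_biUnion fun j _ => (hpm.1.iterate j) hBm
    have hpreBt : T ⁻¹' (⋃ j ∈ Finset.range m, T^[j] ⁻¹' B)
        = ⋃ j ∈ Finset.range m, T^[j + 1] ⁻¹' B := by
      rw [Set.preimage_iUnion₂]
      refine Set.iUnion₂_congr fun j _ => ?_
      rw [← Set.preimage_comp, ← Function.iterate_succ]
    have hsymm : symmDiff (T ⁻¹' (⋃ j ∈ Finset.range m, T^[j] ⁻¹' B))
        (⋃ j ∈ Finset.range m, T^[j] ⁻¹' B) ⊆ ({w : unitInterval | T^[m] w = w})ᶜ := by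
      rw [hpreBt]
      intro w hw hwP
      have hwP' : T^[m] w = w := hwP
      rw [Set.mem_symmDiff] at hw
      rcases hw with ⟨hw1, hw2⟩ | ⟨hw1, hw2⟩
      · simp only [Set.mem_iUnion, Set.mem_preimage, Finset.mem_range] at hw1 hw2
        obtain ⟨j, hj, hjB⟩ := hw1
        rcases Nat.lt_or_ge (j + 1) m with hlt | hge
        · exact hw2 ⟨j + 1, hlt, hjB⟩
        · have hjm : j + 1 = m := by omega
          rw [hjm, hwP'] at hjB
          exact hw2 ⟨0, by omega, by simpa using hjB⟩
      · simp only [Set.mem_iUnion, Set.mem_preimage, Finset.mem_range] at hw1 hw2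
        obtain ⟨j, hj, hjB⟩ := hw1
        rcases Nat.eq_zero_or_pos j with rfl | hjpos
        · refine hw2 ⟨m - 1, by omega, ?_⟩
          rw [(by omega : m - 1 + 1 = m), hwP']
          simpa using hjB
        · exact hw2 ⟨j - 1, by omega, by rw [(by omega : j - 1 + 1 = j)]; exact hjB⟩
    have haeeq : T ⁻¹' (⋃ j ∈ Finset.range m, T^[j] ⁻¹' B)
        =ᵐ[μ] (⋃ j ∈ Finset.range m, T^[j] ⁻¹' B) := by
      rw [← measure_symmDiff_eq_zero_iff]
      exact measure_mono_null hsymm hPc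
    rcases herg.quasiErgodic.ae_empty_or_univ₀ hBtm.nullMeasurableSet haeeq with h0' | h1'
    · have hBsub : B ⊆ ⋃ j ∈ Finset.range m, T^[j] ⁻¹' B := by
        intro w hw
        exact Set.mem_iUnion₂.2 ⟨0, Finset.mem_range.2 (by omega), by simpa using hw⟩
      have hB00 : μ B = 0 := by
        refine measure_mono_null hBsub ?_
        rw [← measure_empty (μ := μ)]
        exact measure_congr h0'
      exact absurd hB00 hB0.ne'
    · have h1 : μ (⋃ j ∈ Finset.range m, T^[j] ⁻¹' B) = 1 := by
        rw [measure_congr h1', measure_univ]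
      have hle : μ (⋃ j ∈ Finset.range m, T^[j] ⁻¹' B) ≤ ∑ j ∈ Finset.range m, μ (T^[j] ⁻¹' B) :=
        measure_biUnion_finset_le _ _
      have heach : ∀ j ∈ Finset.range m, μ (T^[j] ⁻¹' B) = μ B := fun j _ =>
        (herg.toMeasurePreserving.iterate j).measure_preimage hBm.nullMeasurableSet
      rw [Finset.sum_congr rfl heach, Finset.sum_const, Finset.card_range, nsmul_eq_mul] at hle
      have hmne : (m : ℝ≥0∞) ≠ 0 := Nat.cast_ne_zero.2 hm0
      have hmtop : (m : ℝ≥0∞) ≠ ⊤ := ENNReal.natCast_ne_top m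
      have hlt1 : (m : ℝ≥0∞) * μ B < 1 := by
        have hmul := (ENNReal.mul_lt_mul_iff_right hmne hmtop).2 hBlt
        rwa [ENNReal.mul_inv_cancel hmne hmtop] at hmul
      rw [h1] at hle
      exact absurd (lt_of_le_of_lt hle hlt1) (lt_irrefl 1)

end XiAux

/-- For a transitive piecewise monotonic map `T` and a `T`-ergodic `T`-invariant Borel
probability measure `μ` which is not a periodic measure, the σ-algebra generated by
`⋃_{k ≥ 1} ξ_k` coincides with the Borel σ-algebra of `[0,1]` modulo `μ`-null sets:
each set in either σ-algebra differs from a set in the other by a `μ`-null set. -/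
theorem generateFrom_xiRef_eq_borel_mod_null
    (T : unitInterval → unitInterval) (N : ℕ) (c : ℕ → unitInterval)
    (hpm : IsPiecewiseMonotonic T N c) (htr : TransitiveMap T)
    (μ : Measure unitInterval) [IsProbabilityMeasure μ]
    (herg : Ergodic T μ) (hnp : ¬ IsPeriodicMeasure T μ) :
    (∀ A : Set unitInterval,
      MeasurableSet[MeasurableSpace.generateFrom
        {A : Set unitInterval | ∃ k : ℕ, 1 ≤ k ∧ A ∈ xiRef T N c k}] A →
      ∃ B : Set unitInterval, MeasurableSet B ∧ μ (symmDiff A B) = 0) ∧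
    (∀ B : Set unitInterval, MeasurableSet B →
      ∃ A : Set unitInterval,
        MeasurableSet[MeasurableSpace.generateFrom
          {A : Set unitInterval | ∃ k : ℕ, 1 ≤ k ∧ A ∈ xiRef T N c k}] A ∧
        μ (symmDiff A B) = 0) := by
  classical
  haveI : NullSingletonClass μ := ⟨fun x => by
    by_contra hx
    exact hnp (XiAux.periodic_of_atom herg hx)⟩
  constructor
  · intro A hA
    have hle : MeasurableSpace.generateFrom
        {A : Set unitInterval | ∃ k : ℕ, 1 ≤ k ∧ A ∈ xiRef T N c k} ≤
        (Subtype.instMeasurableSpace : MeasurableSpace unitInterval) := by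
      refine MeasurableSpace.generateFrom_le ?_
      rintro A ⟨k, hk, hne, Z, hZ, rfl⟩
      refine Set.Finite.measurableSet_biInter (Finset.range k).finite_toSet fun i hi => ?_
      obtain ⟨mi, h1, h2, hEq⟩ := hZ i (Finset.mem_range.1 hi)
      rw [hEq]
      exact (hpm.1.iterate i) measurableSet_Ioo
    exact ⟨A, hle _ hA, by simp [symmDiff_self, Set.bot_eq_empty]⟩
  · intro B hB
    have heq : (Subtype.instMeasurableSpace : MeasurableSpace unitInterval)
        = MeasurableSpace.generateFrom
            (Set.range (Set.Iio : unitInterval → Set unitInterval)) := by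
      rw [BorelSpace.measurable_eq (α := unitInterval), borel_eq_generateFrom_Iio]
    have hB' : MeasurableSet[MeasurableSpace.generateFrom
        (Set.range (Set.Iio : unitInterval → Set unitInterval))] B := by
      rw [← heq]; exact hB
    refine MeasurableSpace.generateFrom_induction
      (Set.range (Set.Iio : unitInterval → Set unitInterval))
      (fun s _ => ∃ A : Set unitInterval,
        MeasurableSet[MeasurableSpace.generateFrom
          {A : Set unitInterval | ∃ k : ℕ, 1 ≤ k ∧ A ∈ xiRef T N c k}] A ∧
        μ (symmDiff A s) = 0) ?_ ?_ ?_ ?_ B hB'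
    · rintro u ⟨t, rfl⟩ -
      refine ⟨XiAux.Aset T N c t, XiAux.Aset_measurable_gen t, ?_⟩
      have h1 : symmDiff (XiAux.Aset T N c t) (Set.Iio t)
          ⊆ Set.Iio t \ XiAux.Aset T N c t := by
        intro w hw
        rw [Set.mem_symmDiff] at hw
        rcases hw with ⟨hw1, hw2⟩ | hw
        · exact absurd (XiAux.Aset_subset_Iio t hw1) hw2
        · exact hw
      exact measure_mono_null h1 (XiAux.key hpm herg t)
    · exact ⟨∅, @MeasurableSet.empty _ (MeasurableSpace.generateFrom
        {A : Set unitInterval | ∃ k : ℕ, 1 ≤ k ∧ A ∈ xiRef T N c k}), by simp [symmDiff_self, Set.bot_eq_empty]⟩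
    · rintro u - ⟨A, hA, h0⟩
      exact ⟨Aᶜ, hA.compl, by rwa [compl_symmDiff_compl]⟩
    · intro f hs hf
      choose A hA h0 using hf
      refine ⟨⋃ n, A n, MeasurableSet.iUnion hA, ?_⟩
      have hsub : symmDiff (⋃ n, A n) (⋃ n, f n) ⊆ ⋃ n, symmDiff (A n) (f n) := by
        intro w hw
        rw [Set.mem_symmDiff] at hw
        rcases hw with ⟨hw1, hw2⟩ | ⟨hw1, hw2⟩
        · obtain ⟨n, hn⟩ := Set.mem_iUnion.1 hw1
          refine Set.mem_iUnion.2 ⟨n, ?_⟩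
          rw [Set.mem_symmDiff]
          exact Or.inl ⟨hn, fun hfn => hw2 (Set.mem_iUnion.2 ⟨n, hfn⟩)⟩
        · obtain ⟨n, hn⟩ := Set.mem_iUnion.1 hw1
          refine Set.mem_iUnion.2 ⟨n, ?_⟩
          rw [Set.mem_symmDiff]
          exact Or.inr ⟨hn, fun hfn => hw2 (Set.mem_iUnion.2 ⟨n, hfn⟩)⟩
      exact measure_mono_null hsub (measure_iUnion_null h0)
end

section
/- Let T : [0,1] → [0,1] be a piecewise monotonic map, let l ≥ m ≥ 1 be integers, and let y, p ∈ [0,1] be points such that for every 0 ≤ s ≤ l−1 the points T^s y and T^s p lie in the same element of ξ. Then for every Z ∈ ξ_m, |#{0 ≤ s ≤ l−1 : T^s y ∈ Z} − #{0 ≤ s ≤ l−1 : T^s p ∈ Z}| ≤ m. -/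
open MeasureTheory Filter Set
open scoped ENNReal NNReal

lemma xiPart_eq_of_mem {N : ℕ} {c : ℕ → unitInterval} (hc : StrictMonoOn c (Set.Iic N))
    {W Z : Set unitInterval} (hW : W ∈ xiPart N c) (hZ : Z ∈ xiPart N c)
    {x : unitInterval} (hxW : x ∈ W) (hxZ : x ∈ Z) : W = Z := by
  obtain ⟨i, hi1, hiN, rfl⟩ := hW
  obtain ⟨j, hj1, hjN, rfl⟩ := hZ
  rcases lt_trichotomy i j with h | h | h
  · exfalso
    have hle : c i ≤ c (j - 1) :=
      hc.monotoneOn (by simpa using hiN) (by simp; omega) (by omega)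
    exact absurd (hxW.2.trans_le hle) (not_lt.2 hxZ.1.le)
  · rw [h]
  · exfalso
    have hle : c j ≤ c (i - 1) :=
      hc.monotoneOn (by simpa using hjN) (by simp; omega) (by omega)
    exact absurd (hxZ.2.trans_le hle) (not_lt.2 hxW.1.le)

/-- If `T` is piecewise monotonic, `l ≥ m ≥ 1`, and the points `T^s y` and `T^s p` lie in
the same element of `ξ` for each `0 ≤ s ≤ l-1`, then for each `Z ∈ ξ_m` the numbers of
times `0 ≤ s ≤ l-1` with `T^s y ∈ Z`, resp. `T^s p ∈ Z`, differ by at most `m`. -/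
theorem visit_count_diff_le
    (T : unitInterval → unitInterval) (N : ℕ) (c : ℕ → unitInterval)
    (hpm : IsPiecewiseMonotonic T N c) (l m : ℕ) (hm : 1 ≤ m) (hml : m ≤ l)
    (y p : unitInterval)
    (hsame : ∀ s : ℕ, s < l → ∃ Z ∈ xiPart N c, T^[s] y ∈ Z ∧ T^[s] p ∈ Z) :
    ∀ Z ∈ xiRef T N c m,
      |(Nat.card {s : ℕ | s < l ∧ T^[s] y ∈ Z} : ℤ) -
        (Nat.card {s : ℕ | s < l ∧ T^[s] p ∈ Z} : ℤ)| ≤ (m : ℤ) := by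
  obtain ⟨_, _, _, _, hc, _⟩ := hpm
  rintro Z ⟨-, W, hWmem, rfl⟩
  set Z : Set unitInterval := ⋂ i ∈ Finset.range m, T^[i] ⁻¹' W i with hZdef
  -- membership characterization
  have hmemZ : ∀ x : unitInterval, ∀ s : ℕ, (T^[s] x ∈ Z ↔ ∀ i < m, T^[s + i] x ∈ W i) := by
    intro x s
    simp only [hZdef, Set.mem_iInter, Finset.mem_range, Set.mem_preimage]
    constructor
    · intro h i hi
      have := h i hi
      rwa [← Function.iterate_add_apply, Nat.add_comm] at this
    · intro h i hi
      rw [← Function.iterate_add_apply, Nat.add_comm]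
      exact h i hi
  -- key: visits coincide when s + m ≤ l
  have key : ∀ s : ℕ, s + m ≤ l → (T^[s] y ∈ Z ↔ T^[s] p ∈ Z) := by
    intro s hs
    rw [hmemZ, hmemZ]
    have main : ∀ i < m, (T^[s + i] y ∈ W i ↔ T^[s + i] p ∈ W i) := by
      intro i hi
      obtain ⟨V, hV, hyV, hpV⟩ := hsame (s + i) (by omega)
      constructor
      · intro hy
        rw [← xiPart_eq_of_mem hc hV (hWmem i hi) hyV hy]; exact hpV
      · intro hp
        rw [← xiPart_eq_of_mem hc hV (hWmem i hi) hpV hp]; exact hyV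
    constructor
    · intro h i hi; exact (main i hi).1 (h i hi)
    · intro h i hi; exact (main i hi).2 (h i hi)
  set Ay : Set ℕ := {s : ℕ | s < l ∧ T^[s] y ∈ Z} with hAy
  set Ap : Set ℕ := {s : ℕ | s < l ∧ T^[s] p ∈ Z} with hAp
  have hfin : ∀ A : Set ℕ, A ⊆ Set.Iio l → A.Finite := fun A hA =>
    (Set.finite_Iio l).subset hA
  have hAyfin : Ay.Finite := hfin _ (fun s hs => hs.1)
  have hApfin : Ap.Finite := hfin _ (fun s hs => hs.1)
  have hIcofin : (Set.Ico (l + 1 - m) l).Finite := hfin _ (fun s hs => hs.2)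
  have hIcocard : (Set.Ico (l + 1 - m) l).ncard = m - 1 := by
    rw [← Finset.coe_Ico, Set.ncard_coe_finset, Nat.card_Ico]; omega
  have hsub1 : Ay ⊆ Ap ∪ Set.Ico (l + 1 - m) l := by
    intro s hs
    by_cases h : s + m ≤ l
    · exact Or.inl ⟨hs.1, (key s h).1 hs.2⟩
    · exact Or.inr ⟨by omega, hs.1⟩
  have hsub2 : Ap ⊆ Ay ∪ Set.Ico (l + 1 - m) l := by
    intro s hs
    by_cases h : s + m ≤ l
    · exact Or.inl ⟨hs.1, (key s h).2 hs.2⟩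
    · exact Or.inr ⟨by omega, hs.1⟩
  have hb1 : Ay.ncard ≤ Ap.ncard + (m - 1) := by
    calc Ay.ncard ≤ (Ap ∪ Set.Ico (l + 1 - m) l).ncard :=
          Set.ncard_le_ncard hsub1 (hApfin.union hIcofin)
    _ ≤ Ap.ncard + (Set.Ico (l + 1 - m) l).ncard := Set.ncard_union_le _ _
    _ = Ap.ncard + (m - 1) := by rw [hIcocard]
  have hb2 : Ap.ncard ≤ Ay.ncard + (m - 1) := by
    calc Ap.ncard ≤ (Ay ∪ Set.Ico (l + 1 - m) l).ncard :=
          Set.ncard_le_ncard hsub2 (hAyfin.union hIcofin)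
    _ ≤ Ay.ncard + (Set.Ico (l + 1 - m) l).ncard := Set.ncard_union_le _ _
    _ = Ay.ncard + (m - 1) := by rw [hIcocard]
  rw [Nat.card_coe_set_eq, Nat.card_coe_set_eq]
  rw [abs_sub_le_iff]
  omega
end

section
/- Let T : [0,1] → [0,1] be a transitive piecewise monotonic map, let μ be a T-ergodic Borel probability measure that is not a periodic measure, let c > 0, and let x ∈ R be a point such that limsup_{n→∞} μ(T^n ξ_n(x)) ≥ c and such that the empirical measures (1/n) Σ_{s=0}^{n-1} δ_{T^s x} converge to μ in the weak-* topology. Then there exist n_0 ∈ ℕ and η > 0 such that the open interval B(T^{n_0} x, η) of center T^{n_0} x and radius η is contained in T^n ξ_n(x) for infinitely many n ∈ ℕ. -/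
open MeasureTheory Filter Set
open scoped ENNReal NNReal

namespace PMAux

open scoped Classical

/-- the canonical partition element containing `y` (junk `∅` if none). -/
noncomputable def pieceO (N : ℕ) (c : ℕ → unitInterval) (y : unitInterval) :
    Set unitInterval :=
  if h : ∃ Z ∈ xiPart N c, y ∈ Z then h.choose else ∅

lemma pieceO_mem {N c y} (h : y ∈ ⋃₀ xiPart N c) :
    pieceO N c y ∈ xiPart N c ∧ y ∈ pieceO N c y := by
  rw [Set.mem_sUnion] at h
  have h' : ∃ Z ∈ xiPart N c, y ∈ Z := h
  rw [pieceO]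
  rw [dif_pos h']
  exact ⟨h'.choose_spec.1, h'.choose_spec.2⟩

/-- elements of the partition containing a common point coincide -/
lemma xiPart_unique {T N c} (hpm : IsPiecewiseMonotonic T N c) {Z Z' : Set unitInterval}
    (hZ : Z ∈ xiPart N c) (hZ' : Z' ∈ xiPart N c) {y : unitInterval}
    (hy : y ∈ Z) (hy' : y ∈ Z') : Z = Z' := by
  obtain ⟨i, hi1, hiN, rfl⟩ := hZ
  obtain ⟨j, hj1, hjN, rfl⟩ := hZ'
  rcases lt_trichotomy i j with hij | rfl | hij
  · exfalso
    have h1 : c i ≤ c (j - 1) :=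
      hpm.2.2.2.2.1.monotoneOn (Set.mem_Iic.mpr hiN) (Set.mem_Iic.mpr (by omega))
        (by omega)
    exact absurd (hy.2.trans_le (h1.trans (le_of_lt hy'.1))) (lt_irrefl _)
  · rfl
  · exfalso
    have h1 : c j ≤ c (i - 1) :=
      hpm.2.2.2.2.1.monotoneOn (Set.mem_Iic.mpr hjN) (Set.mem_Iic.mpr (by omega))
        (by omega)
    exact absurd (hy'.2.trans_le (h1.trans (le_of_lt hy.1))) (lt_irrefl _)

variable {T : unitInterval → unitInterval} {N : ℕ} {c : ℕ → unitInterval}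

noncomputable def cell (T : unitInterval → unitInterval) (N : ℕ) (c : ℕ → unitInterval)
    (n : ℕ) (x : unitInterval) : Set unitInterval :=
  ⋂ i ∈ Finset.range n, T^[i] ⁻¹' pieceO N c (T^[i] x)

lemma good_orbit {x} (hx : x ∈ goodSet T N c) (i : ℕ) : T^[i] x ∈ ⋃₀ xiPart N c := by
  have := Set.mem_iInter.mp hx i
  exact this

lemma good_T {x} (hx : x ∈ goodSet T N c) : T x ∈ goodSet T N c := by
  refine Set.mem_iInter.mpr fun n => ?_
  have := Set.mem_iInter.mp hx (n + 1)
  rwa [Set.mem_preimage, Function.iterate_succ_apply] at this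

lemma mem_cell {x} (hx : x ∈ goodSet T N c) (n : ℕ) : x ∈ cell T N c n x := by
  refine Set.mem_iInter₂.mpr fun i _ => ?_
  exact (pieceO_mem (good_orbit hx i)).2

lemma cell_mem_xiRef {x} (hx : x ∈ goodSet T N c) (n : ℕ) :
    cell T N c n x ∈ xiRef T N c n := by
  refine ⟨⟨x, mem_cell hx n⟩, fun i => pieceO N c (T^[i] x), fun i _ =>
    (pieceO_mem (good_orbit hx i)).1, rfl⟩

lemma xiCell_eq (hpm : IsPiecewiseMonotonic T N c) {x} (hx : x ∈ goodSet T N c) (n : ℕ) :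
    xiCell T N c n x = cell T N c n x := by
  apply Set.Subset.antisymm
  · exact Set.sInter_subset_of_mem ⟨cell_mem_xiRef hx n, mem_cell hx n⟩
  · intro z hz
    refine Set.mem_sInter.mpr fun A hA => ?_
    obtain ⟨⟨-, Z, hZ, rfl⟩, hxA⟩ := hA
    refine Set.mem_iInter₂.mpr fun i hi => ?_
    have hi' : i < n := Finset.mem_range.mp hi
    have hxZ : T^[i] x ∈ Z i := Set.mem_iInter₂.mp hxA i hi
    have : Z i = pieceO N c (T^[i] x) :=
      xiPart_unique hpm (hZ i hi') (pieceO_mem (good_orbit hx i)).1 hxZ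
        (pieceO_mem (good_orbit hx i)).2
    rw [this]
    exact Set.mem_iInter₂.mp hz i hi

lemma cell_zero (x : unitInterval) : cell T N c 0 x = Set.univ := by
  simp [cell]

lemma cell_succ (x : unitInterval) (n : ℕ) :
    cell T N c (n + 1) x = pieceO N c x ∩ T ⁻¹' cell T N c n (T x) := by
  ext z
  simp only [cell, Set.mem_iInter, Finset.mem_range, Set.mem_inter_iff, Set.mem_preimage]
  constructor
  · intro h
    refine ⟨by simpa using h 0 (Nat.succ_pos n), fun i hi => ?_⟩
    have := h (i + 1) (by omega)
    rwa [Function.iterate_succ_apply, Function.iterate_succ_apply] at this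
  · rintro ⟨h0, h⟩ i hi
    cases i with
    | zero => simpa using h0
    | succ i =>
      rw [Function.iterate_succ_apply, Function.iterate_succ_apply]
      exact h i (by omega)

/-- transfer of `OrdConnected` along `Subtype.val`. -/
lemma ordConnected_iff_val {s : Set unitInterval} :
    s.OrdConnected ↔ (Subtype.val '' s : Set ℝ).OrdConnected := by
  constructor
  · intro h
    refine ⟨fun a ha b hb t ht => ?_⟩
    obtain ⟨p, hp, rfl⟩ := ha
    obtain ⟨q, hq, rfl⟩ := hb
    have htI : t ∈ unitInterval := ⟨p.2.1.trans ht.1, ht.2.trans q.2.2⟩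
    refine ⟨⟨t, htI⟩, h.out hp hq ⟨ht.1, ht.2⟩, rfl⟩
  · intro h
    refine ⟨fun a ha b hb t ht => ?_⟩
    have : (t : ℝ) ∈ Subtype.val '' s :=
      h.out ⟨a, ha, rfl⟩ ⟨b, hb, rfl⟩ ⟨ht.1, ht.2⟩
    obtain ⟨w, hw, hwt⟩ := this
    rwa [← Subtype.coe_injective hwt]

lemma ordConnected_iff_preconnected {s : Set unitInterval} :
    s.OrdConnected ↔ IsPreconnected s := by
  rw [ordConnected_iff_val, ← isPreconnected_iff_ordConnected,
    Topology.IsInducing.subtypeVal.isPreconnected_image]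

lemma pieceO_ordConnected (N : ℕ) (c : ℕ → unitInterval) (y : unitInterval) :
    (pieceO N c y).OrdConnected := by
  rw [pieceO]
  split
  · next h =>
    obtain ⟨i, -, -, hZ⟩ := h.choose_spec.1
    rw [hZ]; exact Set.ordConnected_Ioo
  · exact Set.ordConnected_empty

lemma pieceO_props (hpm : IsPiecewiseMonotonic T N c) {y : unitInterval}
    (hy : y ∈ ⋃₀ xiPart N c) :
    (StrictMonoOn T (pieceO N c y) ∨ StrictAntiOn T (pieceO N c y)) ∧
      ContinuousOn T (pieceO N c y) := by
  obtain ⟨i, hi1, hiN, hZ⟩ := (pieceO_mem (N := N) (c := c) hy).1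
  rw [hZ]
  exact hpm.2.2.2.2.2 i hi1 hiN

/-- cells are order-connected and their forward images of order-connected subsets
are order-connected -/
lemma cell_ordConnected (hpm : IsPiecewiseMonotonic T N c) :
    ∀ n : ℕ, ∀ x ∈ goodSet T N c, (cell T N c n x).OrdConnected ∧
      ∀ B ⊆ cell T N c n x, B.OrdConnected → (T^[n] '' B).OrdConnected := by
  intro n
  induction n with
  | zero =>
    intro x _
    rw [cell_zero]
    exact ⟨Set.ordConnected_univ, fun B _ hB => by simpa using hB⟩
  | succ n ih =>
    intro x hx
    have hTx := good_T hx
    have hxU : x ∈ ⋃₀ xiPart N c := by simpa using good_orbit hx 0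
    have hmem := pieceO_mem hxU
    have hprops := pieceO_props hpm hxU
    rw [cell_succ]
    constructor
    · refine ⟨fun a ha b hb t ht => ?_⟩
      have htZ : t ∈ pieceO N c x := (pieceO_ordConnected N c x).out ha.1 hb.1 ht
      refine ⟨htZ, ?_⟩
      have hcn := (ih (T x) hTx).1
      rcases hprops.1 with hmono | hanti
      · exact hcn.out ha.2 hb.2
          ⟨hmono.monotoneOn ha.1 htZ ht.1, hmono.monotoneOn htZ hb.1 ht.2⟩
      · exact hcn.out hb.2 ha.2
          ⟨hanti.antitoneOn htZ hb.1 ht.2, hanti.antitoneOn ha.1 htZ ht.1⟩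
    · intro B hB hBoc
      have hBZ : B ⊆ pieceO N c x := fun z hz => (hB hz).1
      have hTB : T '' B ⊆ cell T N c n (T x) := by
        rintro - ⟨z, hz, rfl⟩
        exact (hB hz).2
      have hTBoc : (T '' B).OrdConnected := by
        rw [ordConnected_iff_preconnected]
        exact (ordConnected_iff_preconnected.mp hBoc).image T (hprops.2.mono hBZ)
      have := (ih (T x) hTx).2 (T '' B) hTB hTBoc
      rwa [← Set.image_comp, ← Function.iterate_succ] at this




/-- an ergodic probability measure with an atom is a periodic measure -/
lemma periodic_of_atom (μ : Measure unitInterval) [IsProbabilityMeasure μ]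
    (herg : Ergodic T μ) (y : unitInterval) (hy : μ {y} ≠ 0) :
    IsPeriodicMeasure T μ := by
  classical
  set m : ℝ≥0∞ := μ {y} with hm_def
  have hm : 0 < m := pos_iff_ne_zero.mpr hy
  have hmtop : m ≠ ⊤ := (measure_lt_top μ _).ne
  have hpre : ∀ n : ℕ, μ (T^[n] ⁻¹' {y}) = m := fun n =>
    (herg.toMeasurePreserving.iterate n).measure_preimage
      (measurableSet_singleton y).nullMeasurableSet
  -- find a period
  have hper : ∃ k : ℕ, 0 < k ∧ T^[k] y = y := by
    obtain ⟨K, hK⟩ := ENNReal.exists_nat_gt (ENNReal.inv_ne_top.mpr hm.ne' : m⁻¹ ≠ ⊤)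
    by_contra hno
    push_neg at hno
    -- sets E i = T^[i] ⁻¹' {y}, i < K, must be pairwise non-a.e.-disjoint
    have hdisj : Pairwise (Function.onFun (AEDisjoint μ) fun i : Fin K => T^[(i : ℕ)] ⁻¹' {y}) := by
      intro i j hij
      rw [Function.onFun, AEDisjoint]
      by_contra hpos
      obtain ⟨z, hzi, hzj⟩ := nonempty_of_measure_ne_zero hpos
      simp only [Set.mem_preimage, Set.mem_singleton_iff] at hzi hzj
      rcases Ne.lt_or_gt (fun h : (i:ℕ) = (j:ℕ) => hij (Fin.ext h)) with hlt | hlt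
      · have h1 : T^[(j:ℕ) - (i:ℕ) + (i:ℕ)] z = y := by
          rw [Nat.sub_add_cancel hlt.le]; exact hzj
        rw [Function.iterate_add_apply, hzi] at h1
        exact hno _ (by omega) h1
      · have h1 : T^[(i:ℕ) - (j:ℕ) + (j:ℕ)] z = y := by
          rw [Nat.sub_add_cancel hlt.le]; exact hzi
        rw [Function.iterate_add_apply, hzj] at h1
        exact hno _ (by omega) h1
    have hmeas : ∀ i : Fin K, NullMeasurableSet (T^[(i:ℕ)] ⁻¹' {y}) μ :=
      fun i => ((measurableSet_singleton y).preimage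
        ((herg.toMeasurePreserving.iterate (i:ℕ)).measurable)).nullMeasurableSet
    have hsum := measure_iUnion₀ hdisj hmeas
    have hle : (K : ℝ≥0∞) * m ≤ 1 := by
      calc (K : ℝ≥0∞) * m = ∑' i : Fin K, μ (T^[(i:ℕ)] ⁻¹' {y}) := by
            simp [hpre, tsum_fintype, Finset.sum_const, mul_comm]
        _ = μ (⋃ i : Fin K, T^[(i:ℕ)] ⁻¹' {y}) := hsum.symm
        _ ≤ 1 := prob_le_one
    have : (K : ℝ≥0∞) ≤ m⁻¹ := ENNReal.le_inv_iff_mul_le.mpr hle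
    exact absurd hK (not_lt.mpr this)
  -- minimal period
  let k0 := Nat.find hper
  have hk0 := Nat.find_spec hper
  have hk0pos : 0 < k0 := hk0.1
  have hk0per : T^[k0] y = y := hk0.2
  -- masses along orbit are constant = m
  have gmono : ∀ j : ℕ, μ {T^[j] y} ≤ μ {T^[j+1] y} := by
    intro j
    have hsub : {T^[j] y} ⊆ T ⁻¹' {T^[j+1] y} := by
      simp [Function.iterate_succ_apply']
    calc μ {T^[j] y} ≤ μ (T ⁻¹' {T^[j+1] y}) := measure_mono hsub
      _ = μ {T^[j+1] y} := herg.toMeasurePreserving.measure_preimage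
          (measurableSet_singleton _).nullMeasurableSet
  have gmono' : ∀ i j : ℕ, i ≤ j → μ {T^[i] y} ≤ μ {T^[j] y} := by
    intro i j hij
    induction j with
    | zero => simpa [Nat.le_zero.mp hij]
    | succ j ihj =>
      rcases Nat.lt_or_ge i (j+1) with h | h
      · exact (ihj (by omega)).trans (gmono j)
      · have : i = j + 1 := by omega
        simp [this]
  have hgm : ∀ j ≤ k0, μ {T^[j] y} = m := by
    intro j hj
    refine le_antisymm ?_ ?_
    · have := gmono' j k0 hj
      rwa [hk0per] at this
    · exact gmono' 0 j (Nat.zero_le j)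
  -- orbit points are pairwise distinct below k0
  have hinj : Set.InjOn (fun j => T^[j] y) (Finset.range k0 : Set ℕ) := by
    intro i hi j hj hij
    simp only [Finset.coe_range, Set.mem_Iio] at hi hj
    by_contra hne
    have hij' : T^[i] y = T^[j] y := hij
    rcases Ne.lt_or_gt hne with hlt | hlt
    · refine Nat.find_min hper (m := k0 - j + i) (by omega) ⟨by omega, ?_⟩
      rw [Function.iterate_add_apply, hij', ← Function.iterate_add_apply,
        Nat.sub_add_cancel hj.le, hk0per]
    · refine Nat.find_min hper (m := k0 - i + j) (by omega) ⟨by omega, ?_⟩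
      rw [Function.iterate_add_apply, ← hij', ← Function.iterate_add_apply,
        Nat.sub_add_cancel hi.le, hk0per]
  -- the orbit as a finset
  set O : Finset unitInterval := (Finset.range k0).image (fun j => T^[j] y) with hO_def
  have hOcard : O.card = k0 := by
    rw [hO_def, Finset.card_image_of_injOn hinj, Finset.card_range]
  have hOmeas : MeasurableSet (↑O : Set unitInterval) := O.measurableSet
  have hμO : μ (↑O : Set unitInterval) = (k0 : ℝ≥0∞) * m := by
    have : (↑O : Set unitInterval) = ⋃ j ∈ Finset.range k0, {T^[j] y} := by
      ext z; simp [hO_def, eq_comm]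
    rw [this, measure_biUnion_finset ?_ (fun _ _ => measurableSet_singleton _)]
    · rw [Finset.sum_congr rfl fun j hj => hgm j (Finset.mem_range.mp hj).le]
      simp [mul_comm]
    · intro i hi j hj hij
      simp only [Set.disjoint_singleton]
      exact fun h => hij (hinj (by simpa using hi) (by simpa using hj) h)
  -- O is forward invariant, hence full measure by ergodicity
  have hsubinv : (↑O : Set unitInterval) ⊆ T ⁻¹' (↑O : Set unitInterval) := by
    intro z hz
    simp only [hO_def, Finset.coe_image, Finset.coe_range, Set.mem_image, Set.mem_Iio] at hz
    obtain ⟨j, hj, rfl⟩ := hz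
    simp only [Set.mem_preimage, hO_def, Finset.coe_image, Finset.coe_range, Set.mem_image,
      Set.mem_Iio]
    rcases Nat.lt_or_ge (j + 1) k0 with h | h
    · exact ⟨j + 1, h, Function.iterate_succ_apply' T j y⟩
    · have hjk : j + 1 = k0 := by omega
      refine ⟨0, hk0pos, ?_⟩
      have h2 : T^[j+1] y = T (T^[j] y) := Function.iterate_succ_apply' T j y
      rw [hjk, hk0per] at h2
      simp only [Function.iterate_zero_apply]
      first
        | exact h2
        | exact h2.symm
  have hOfull : μ (↑O : Set unitInterval) = 1 := by
    rcases herg.ae_empty_or_univ_of_ae_le_preimage hOmeas.nullMeasurableSet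
        (HasSubset.Subset.eventuallyLE hsubinv) with h | h
    · exfalso
      have h0 : μ (↑O : Set unitInterval) = 0 := by
        simpa using measure_congr h
      have : m ≤ μ (↑O : Set unitInterval) := by
        refine measure_mono ?_
        simp only [Set.singleton_subset_iff, hO_def, Finset.coe_image, Finset.coe_range]
        exact ⟨0, hk0pos, rfl⟩
      rw [h0] at this
      exact hm.ne' (le_antisymm this zero_le)
    · have := measure_congr h
      simpa using this
  have hmk0 : m = (k0 : ℝ≥0∞)⁻¹ := by
    have hk0ne : (k0 : ℝ≥0∞) ≠ 0 := Nat.cast_ne_zero.mpr hk0pos.ne'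
    have hk0top : (k0 : ℝ≥0∞) ≠ ⊤ := ENNReal.natCast_ne_top k0
    rw [hμO] at hOfull
    rw [← ENNReal.eq_inv_of_mul_eq_one_left ?_]
    rwa [mul_comm] at hOfull
  -- the measure is the periodic measure on the orbit of y
  refine ⟨y, k0, hk0pos, hk0per, ?_⟩
  have hcompl : μ (↑O : Set unitInterval)ᶜ = 0 := by
    rw [measure_compl hOmeas (measure_lt_top μ _).ne, hOfull]
    simp
  refine Measure.ext fun s hs => ?_
  have hs1 : μ s = μ (s ∩ ↑O) := by
    refine le_antisymm ?_ (measure_mono Set.inter_subset_left)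
    calc μ s ≤ μ (s ∩ ↑O) + μ (s ∩ (↑O : Set unitInterval)ᶜ) :=
          le_trans (measure_mono (by intro z hz; by_cases h : z ∈ (↑O : Set unitInterval) <;>
            simp [hz, h])) (measure_union_le _ _)
      _ ≤ μ (s ∩ ↑O) + 0 := by
          gcongr
          exact le_trans (measure_mono Set.inter_subset_right) hcompl.le
      _ = μ (s ∩ ↑O) := by simp
  have hfin : s ∩ ↑O = ↑(O.filter (· ∈ s)) := by
    ext z
    constructor
    · rintro ⟨hzs, hzO⟩
      exact Finset.mem_coe.mpr (Finset.mem_filter.mpr ⟨Finset.mem_coe.mp hzO, hzs⟩)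
    · intro hz
      have h2 := Finset.mem_filter.mp (Finset.mem_coe.mp hz)
      exact ⟨h2.2, h2.1⟩
  have hcard : μ (s ∩ ↑O) = ((O.filter (· ∈ s)).card : ℝ≥0∞) * m := by
    rw [hfin]
    have : (↑(O.filter (· ∈ s)) : Set unitInterval) = ⋃ p ∈ O.filter (· ∈ s), {p} := by
      ext z
      simp only [Set.mem_iUnion, Set.mem_singleton_iff, Finset.mem_coe]
      exact ⟨fun h => ⟨z, h, rfl⟩, fun ⟨p, hp, hz⟩ => hz ▸ hp⟩
    rw [this, measure_biUnion_finset ?_ (fun _ _ => measurableSet_singleton _)]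
    · have : ∀ p ∈ O.filter (· ∈ s), μ {p} = m := by
        intro p hp
        obtain ⟨j, hj, rfl⟩ := Finset.mem_image.mp (Finset.mem_filter.mp hp).1
        exact hgm j (Finset.mem_range.mp hj).le
      rw [Finset.sum_congr rfl this]
      simp [mul_comm]
    · intro i _ j _ hij
      simpa using hij
  -- compute RHS
  have hrhs : ((k0 : ℝ≥0∞)⁻¹ • ∑ j ∈ Finset.range k0, Measure.dirac (T^[j] y)) s
      = (((Finset.range k0).filter (fun j => T^[j] y ∈ s)).card : ℝ≥0∞) * (k0 : ℝ≥0∞)⁻¹ := by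
    rw [Measure.smul_apply, Measure.coe_finset_sum, Finset.sum_apply]
    have : ∀ j ∈ Finset.range k0, Measure.dirac (T^[j] y) s
        = if T^[j] y ∈ s then (1:ℝ≥0∞) else 0 := by
      intro j _
      rw [Measure.dirac_apply' _ hs]
      simp [Set.indicator_apply]
    rw [Finset.sum_congr rfl this, Finset.sum_boole]
    simp [mul_comm]
  have hcards : (O.filter (· ∈ s)).card = ((Finset.range k0).filter (fun j => T^[j] y ∈ s)).card := by
    rw [hO_def, Finset.filter_image]
    rw [Finset.card_image_of_injOn (hinj.mono ?_)]
    intro j hj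
    simpa using (Finset.mem_filter.mp hj).1
  rw [hs1, hcard, hrhs, hcards, hmk0]

end PMAux

/-- Let `T` be a transitive piecewise monotonic map, `μ` a `T`-ergodic Borel probability
measure which is not periodic, `c₀ > 0`, and `x ∈ R` a point with
`limsup_n μ(T^n ξ_n(x)) ≥ c₀` whose empirical measures converge weakly-* to `μ`. Then there
are `n₀ ∈ ℕ` and `η > 0` such that the ball `B(T^{n₀} x, η)` is contained in `T^n ξ_n(x)`
for infinitely many `n`. -/
theorem exists_ball_subset_image_cell_infinitely_often
    (T : unitInterval → unitInterval) (N : ℕ) (c : ℕ → unitInterval)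
    (hpm : IsPiecewiseMonotonic T N c) (htr : TransitiveMap T)
    (μ : ProbabilityMeasure unitInterval)
    (herg : Ergodic T (μ : Measure unitInterval))
    (hnp : ¬ IsPeriodicMeasure T (μ : Measure unitInterval))
    (c₀ : ℝ) (hc₀ : 0 < c₀) (x : unitInterval) (hx : x ∈ goodSet T N c)
    (hlimsup : ENNReal.ofReal c₀ ≤
      Filter.atTop.limsup fun n : ℕ =>
        (μ : Measure unitInterval) (T^[n] '' xiCell T N c n x))
    (hemp : ∀ f : C(unitInterval, ℝ),
      Filter.Tendsto (fun n : ℕ => (∑ s ∈ Finset.range n, f (T^[s] x)) / (n : ℝ))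
        Filter.atTop (nhds (∫ y, f y ∂(μ : Measure unitInterval)))) :
    ∃ (n₀ : ℕ) (η : ℝ), 0 < η ∧
      {n : ℕ | Metric.ball (T^[n₀] x) η ⊆ T^[n] '' xiCell T N c n x}.Infinite := by
  classical
  set ν : Measure unitInterval := (μ : Measure unitInterval) with hν
  -- the measure has no atoms, since it is ergodic and not periodic
  have hna : ∀ y : unitInterval, ν {y} = 0 := by
    intro y
    by_contra hy
    exact hnp (PMAux.periodic_of_atom ν herg y hy)
  set J : ℕ → Set unitInterval := fun n => T^[n] '' xiCell T N c n x with hJ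
  -- each J n is order-connected
  have hJoc : ∀ n, (J n).OrdConnected := by
    intro n
    have h1 := PMAux.cell_ordConnected hpm n x hx
    have : J n = T^[n] '' PMAux.cell T N c n x := by
      show T^[n] '' xiCell T N c n x = _
      rw [PMAux.xiCell_eq hpm hx n]
    rw [this]
    exact h1.2 _ (le_refl _) h1.1
  have hJmem : ∀ n, T^[n] x ∈ J n := by
    intro n
    show T^[n] x ∈ T^[n] '' xiCell T N c n x
    exact ⟨x, Set.mem_sInter.mpr fun A hA => hA.2, rfl⟩
  -- frequently, the measure of J n exceeds ε
  set ε : ℝ≥0∞ := ENNReal.ofReal (c₀ / 2) with hε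
  have hεpos : 0 < ε := ENNReal.ofReal_pos.mpr (by linarith)
  have hfreq : ∃ᶠ n in Filter.atTop, ε < ν (J n) := by
    refine Filter.frequently_lt_of_lt_limsup ?_ (lt_of_lt_of_le ?_ hlimsup)
    · isBoundedDefault
    · exact (ENNReal.ofReal_lt_ofReal_iff hc₀).mpr (by linarith)
  obtain ⟨φ0, hφ0mono, hφ0⟩ := Filter.extraction_of_frequently_atTop hfreq
  -- real infima and suprema of the (projections of the) sets J n
  set A : ℕ → ℝ := fun n => sInf (Subtype.val '' J n) with hA
  set B : ℕ → ℝ := fun n => sSup (Subtype.val '' J n) with hB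
  have hJne : ∀ n, (Subtype.val '' J n).Nonempty :=
    fun n => ⟨((T^[n] x : unitInterval) : ℝ), ⟨T^[n] x, hJmem n, rfl⟩⟩
  have hJsub : ∀ n, Subtype.val '' J n ⊆ Set.Icc (0:ℝ) 1 := by
    rintro n t ⟨p, -, rfl⟩; exact ⟨p.2.1, p.2.2⟩
  have hBddB : ∀ n, BddBelow (Subtype.val '' J n) :=
    fun n => ⟨0, fun t ht => (hJsub n ht).1⟩
  have hBddA : ∀ n, BddAbove (Subtype.val '' J n) :=
    fun n => ⟨1, fun t ht => (hJsub n ht).2⟩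
  have hAmem : ∀ n, A n ∈ Set.Icc (0:ℝ) 1 := by
    intro n
    obtain ⟨t, ht⟩ := hJne n
    exact ⟨le_csInf (hJne n) fun u hu => (hJsub n hu).1,
      (csInf_le (hBddB n) ht).trans (hJsub n ht).2⟩
  have hBmem : ∀ n, B n ∈ Set.Icc (0:ℝ) 1 := by
    intro n
    obtain ⟨t, ht⟩ := hJne n
    exact ⟨(hJsub n ht).1.trans (le_csSup (hBddA n) ht),
      csSup_le (hJne n) fun u hu => (hJsub n hu).2⟩
  -- extract convergent subsequences
  obtain ⟨α, -, φ1, hφ1mono, hα⟩ :=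
    tendsto_subseq_of_bounded (Metric.isBounded_Icc (0:ℝ) 1) (fun k => hAmem (φ0 k))
  obtain ⟨β, -, φ2, hφ2mono, hβ⟩ :=
    tendsto_subseq_of_bounded (Metric.isBounded_Icc (0:ℝ) 1)
      (fun k => hBmem (φ0 (φ1 k)))
  set ψ : ℕ → ℕ := fun k => φ0 (φ1 (φ2 k)) with hψdef
  have hψmono : StrictMono ψ := hφ0mono.comp (hφ1mono.comp hφ2mono)
  have hA' : Filter.Tendsto (fun k => A (ψ k)) Filter.atTop (nhds α) :=
    hα.comp hφ2mono.tendsto_atTop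
  have hB' : Filter.Tendsto (fun k => B (ψ k)) Filter.atTop (nhds β) := hβ
  have hεν : ∀ k, ε < ν (J (ψ k)) := fun k => hφ0 (φ1 (φ2 k))
  -- the limit interval has measure at least ε
  have hIcc : ∀ δ : ℝ, 0 < δ → ε ≤ ν (Subtype.val ⁻¹' Set.Icc (α - δ) (β + δ)) := by
    intro δ hδ
    have h1 : ∀ᶠ k in Filter.atTop, α - δ < A (ψ k) :=
      hA'.eventually (eventually_gt_nhds (by linarith))
    have h2 : ∀ᶠ k in Filter.atTop, B (ψ k) < β + δ :=
      hB'.eventually (eventually_lt_nhds (by linarith))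
    obtain ⟨k, hk1, hk2⟩ := (h1.and h2).exists
    refine le_trans (hεν k).le (measure_mono ?_)
    intro p hp
    have hpmem : (p : ℝ) ∈ Subtype.val '' J (ψ k) := ⟨p, hp, rfl⟩
    exact ⟨(csInf_le (hBddB _) hpmem).trans' hk1.le,
      (le_csSup (hBddA _) hpmem).trans hk2.le⟩
  have hIccab : ε ≤ ν (Subtype.val ⁻¹' Set.Icc α β) := by
    have hmeas : ∀ k : ℕ, NullMeasurableSet
        (Subtype.val ⁻¹' Set.Icc (α - 1/(k+1)) (β + 1/(k+1))) ν :=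
      fun k => (measurableSet_Icc.preimage continuous_subtype_val.measurable).nullMeasurableSet
    have hanti : Antitone (fun k : ℕ =>
        (Subtype.val ⁻¹' Set.Icc (α - 1/(k+1)) (β + 1/(k+1)) : Set unitInterval)) := by
      intro k l hkl z hz
      have hle : 1/((l:ℝ)+1) ≤ 1/((k:ℝ)+1) := by
        apply one_div_le_one_div_of_le <;> [positivity; exact_mod_cast by omega]
      exact ⟨hz.1.trans' (by linarith), hz.2.trans (by linarith)⟩
    have hten := tendsto_measure_iInter_atTop (μ := ν) hmeas hanti
      ⟨0, (measure_lt_top ν _).ne⟩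
    have hiInter : (⋂ k : ℕ, (Subtype.val ⁻¹' Set.Icc (α - 1/(k+1)) (β + 1/(k+1)) : Set unitInterval))
        = Subtype.val ⁻¹' Set.Icc α β := by
      ext z
      simp only [Set.mem_iInter, Set.mem_preimage, Set.mem_Icc]
      constructor
      · intro h
        constructor
        · by_contra hc
          push_neg at hc
          obtain ⟨k, hk⟩ := exists_nat_one_div_lt (show (0:ℝ) < α - z.1 by linarith)
          linarith [(h k).1]
        · by_contra hc
          push_neg at hc
          obtain ⟨k, hk⟩ := exists_nat_one_div_lt (show (0:ℝ) < z.1 - β by linarith)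
          linarith [(h k).2]
      · intro h k
        have : 0 < 1/((k:ℝ)+1) := by positivity
        exact ⟨by linarith [h.1], by linarith [h.2]⟩
    rw [hiInter] at hten
    exact ge_of_tendsto hten (Filter.Eventually.of_forall fun k =>
      hIcc (1/(k+1)) (by positivity))
  -- endpoints carry no mass
  have hpt : ∀ t : ℝ, ν (Subtype.val ⁻¹' {t}) = 0 := by
    intro t
    rcases Set.eq_empty_or_nonempty (Subtype.val ⁻¹' {t} : Set unitInterval) with h | ⟨p, hp⟩
    · simp [h]
    · have : (Subtype.val ⁻¹' {t} : Set unitInterval) = {p} := by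
        ext z
        simp only [Set.mem_preimage, Set.mem_singleton_iff]
        constructor
        · intro hz; exact Subtype.coe_injective (hz.trans hp.symm)
        · rintro rfl; exact hp
      rw [this]; exact hna p
  have hIoo : ε ≤ ν (Subtype.val ⁻¹' Set.Ioo α β) := by
    have hsub : (Subtype.val ⁻¹' Set.Icc α β : Set unitInterval) ⊆
        Subtype.val ⁻¹' Set.Ioo α β ∪ (Subtype.val ⁻¹' {α} ∪ Subtype.val ⁻¹' {β}) := by
      intro z hz
      rcases eq_or_lt_of_le hz.1 with h | h
      · exact Or.inr (Or.inl h.symm)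
      rcases eq_or_lt_of_le hz.2 with h' | h'
      · exact Or.inr (Or.inr h')
      · exact Or.inl ⟨h, h'⟩
    calc ε ≤ ν (Subtype.val ⁻¹' Set.Icc α β) := hIccab
      _ ≤ ν (Subtype.val ⁻¹' Set.Ioo α β) + ν (Subtype.val ⁻¹' {α} ∪ Subtype.val ⁻¹' {β}) :=
          le_trans (measure_mono hsub) (measure_union_le _ _)
      _ ≤ ν (Subtype.val ⁻¹' Set.Ioo α β) + (ν (Subtype.val ⁻¹' {α}) + ν (Subtype.val ⁻¹' {β})) := by
          gcongr; exact measure_union_le _ _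
      _ = ν (Subtype.val ⁻¹' Set.Ioo α β) := by rw [hpt, hpt]; simp
  have hαβ : α < β := by
    by_contra h
    push_neg at h
    rw [Set.Ioo_eq_empty (not_lt.mpr h)] at hIoo
    simp only [Set.preimage_empty, measure_empty] at hIoo
    exact hεpos.ne' (le_antisymm hIoo zero_le)
  -- find a slightly smaller open interval with positive measure
  have hUnion : ∃ k : ℕ, ν (Subtype.val ⁻¹' Set.Ioo (α + 1/(k+1)) (β - 1/(k+1))) ≠ 0 := by
    by_contra h
    push_neg at h
    have hsub : (Subtype.val ⁻¹' Set.Ioo α β : Set unitInterval) ⊆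
        ⋃ k : ℕ, (Subtype.val ⁻¹' Set.Ioo (α + 1/(k+1)) (β - 1/(k+1)) : Set unitInterval) := by
      intro z hz
      obtain ⟨k, hk⟩ := exists_nat_one_div_lt
        (show (0:ℝ) < min (z.1 - α) (β - z.1) by
          rcases hz with ⟨h1, h2⟩; exact lt_min (by linarith) (by linarith))
      refine Set.mem_iUnion.mpr ⟨k, ?_, ?_⟩
      · have := lt_min_iff.mp hk
        linarith [this.1]
      · have := lt_min_iff.mp hk
        linarith [this.2]
    have h0 : ν (Subtype.val ⁻¹' Set.Ioo α β) = 0 :=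
      measure_mono_null hsub (measure_iUnion_null h)
    rw [h0] at hIoo
    exact hεpos.ne' (le_antisymm hIoo zero_le)
  obtain ⟨k1, hVpos⟩ := hUnion
  set d : ℝ := 1/(k1+1) with hd_def
  have hd : 0 < d := by positivity
  set Cset : Set unitInterval := Subtype.val ⁻¹' Set.Icc (α + d) (β - d) with hC_def
  set U : Set unitInterval := Subtype.val ⁻¹' Set.Ioo (α + d/2) (β - d/2) with hU_def
  have hCmeas : MeasurableSet Cset := measurableSet_Icc.preimage continuous_subtype_val.measurable
  have hCclosed : IsClosed Cset := isClosed_Icc.preimage continuous_subtype_val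
  have hUopen : IsOpen U := isOpen_Ioo.preimage continuous_subtype_val
  have hCU : Cset ⊆ U := fun z hz => ⟨by linarith [hz.1], by linarith [hz.2]⟩
  have hCpos : ν Cset ≠ 0 := by
    intro h0
    refine hVpos (measure_mono_null ?_ h0)
    intro z hz
    exact ⟨hz.1.le, hz.2.le⟩
  obtain ⟨f, hf0, hf1, hf01⟩ :=
    exists_continuous_zero_one_of_isClosed hUopen.isClosed_compl hCclosed
      (Set.disjoint_left.mpr fun z hz hzC => hz (hCU hzC))
  -- the integral of f is positive
  have hfint : Integrable f ν := by
    refine ⟨f.continuous.aestronglyMeasurable, ?_⟩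
    refine MeasureTheory.HasFiniteIntegral.of_bounded (C := 1) ?_
    refine Filter.Eventually.of_forall fun z => ?_
    have := hf01 z
    rw [Real.norm_eq_abs, abs_le]
    exact ⟨by linarith [this.1], this.2⟩
  have hfpos : 0 < ∫ y, f y ∂ν := by
    have h1 : (ν Cset).toReal ≤ ∫ y, f y ∂ν := by
      have e1 : ∫ y in Cset, f y ∂ν = (ν Cset).toReal := by
        rw [setIntegral_congr_fun hCmeas hf1]
        simp [Measure.restrict_apply, Measure.real]
      calc (ν Cset).toReal = ∫ y in Cset, f y ∂ν := e1.symm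
        _ ≤ ∫ y, f y ∂ν := setIntegral_le_integral hfint
            (Filter.Eventually.of_forall fun z => (hf01 z).1)
    have h2 : 0 < (ν Cset).toReal :=
      ENNReal.toReal_pos hCpos (measure_lt_top ν _).ne
    linarith
  -- the orbit of x must enter U
  have horbit : ∃ s : ℕ, T^[s] x ∈ U := by
    by_contra h
    push_neg at h
    have hz : ∀ s : ℕ, f (T^[s] x) = 0 := fun s => hf0 (h s)
    have heq : (fun n : ℕ => (∑ s ∈ Finset.range n, f (T^[s] x)) / (n : ℝ))
        = fun _ : ℕ => (0:ℝ) := by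
      funext n
      rw [Finset.sum_congr rfl fun s _ => hz s]
      simp
    have := hemp f
    rw [heq] at this
    have h0 : ∫ y, f y ∂ν = 0 := (tendsto_nhds_unique tendsto_const_nhds this).symm
    rw [h0] at hfpos
    exact lt_irrefl _ hfpos
  obtain ⟨n₀, hn₀⟩ := horbit
  rw [hU_def, Set.mem_preimage, Set.mem_Ioo] at hn₀
  refine ⟨n₀, d/4, by positivity, ?_⟩
  -- eventually the subsequence intervals contain the middle interval
  have hev1 : ∀ᶠ k in Filter.atTop, A (ψ k) < α + d/4 :=
    hA'.eventually (eventually_lt_nhds (by linarith))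
  have hev2 : ∀ᶠ k in Filter.atTop, β - d/4 < B (ψ k) :=
    hB'.eventually (eventually_gt_nhds (by linarith))
  obtain ⟨K, hK⟩ := Filter.eventually_atTop.mp (hev1.and hev2)
  have hsubJ : ∀ k ≥ K, Metric.ball (T^[n₀] x) (d/4) ⊆ J (ψ k) := by
    intro k hk z hz
    rw [Metric.mem_ball, Subtype.dist_eq, Real.dist_eq, abs_lt] at hz
    have hz1 : α + d/4 < z.1 := by linarith [hn₀.1, hz.1, hz.2]
    have hz2 : z.1 < β - d/4 := by linarith [hn₀.2, hz.1, hz.2]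
    obtain ⟨hk1, hk2⟩ := hK k hk
    obtain ⟨p', hp'mem, hp'lt⟩ := exists_lt_of_csInf_lt (hJne (ψ k)) (by
      show A (ψ k) < z.1; linarith)
    obtain ⟨q', hq'mem, hq'gt⟩ := exists_lt_of_lt_csSup (hJne (ψ k)) (by
      show z.1 < B (ψ k); linarith)
    obtain ⟨p, hp, rfl⟩ := hp'mem
    obtain ⟨q, hq, rfl⟩ := hq'mem
    exact (hJoc (ψ k)).out hp hq ⟨le_of_lt hp'lt, le_of_lt hq'gt⟩
  have hinf : (ψ '' Set.Ici K).Infinite :=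
    (Set.Ici_infinite K).image (hψmono.injective.injOn)
  refine hinf.mono ?_
  rintro - ⟨k, hk, rfl⟩
  exact hsubJ k hk
end
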